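/- arXiv:0907.2618 — 5 statements merged into one kernel-verified Lean document; each statement's English description precedes it below -/
import Mathlib

section
/- Let A and B be C*-algebras, let φ : A → B be a surjective *-homomorphism, and let (u_λ)_{λ∈Λ} be an approximate unit for the closed two-sided ideal ker φ. Then for every h ∈ A with h ≥ 0 and every real δ with 0 ≤ δ ≤ 1, one has limsup_λ ‖(1 − u_λ)^{1/2} h (1 − u_λ)^{1/2} + (1 − δ)·u_λ^{1/2} h u_λ^{1/2}‖ ≤ max(‖φ(h)‖, (1 − δ)·‖h‖). -/
open scoped CStarAlgebra
open Filter

/-!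
Put `j = (h - ‖φ h‖)₊`, formed in `A` by the non-unital functional calculus. Then `φ j = 0`,
since the spectrum of `φ h` lies below `‖φ h‖`, and `h ≤ j + ‖φ h‖ • 1` in `A⁺¹`.
Conjugating by `s = (1 - u)^{1/2}` and `w = u^{1/2}`, and using `w h w ≤ ‖h‖ u`, gives
`s h s + (1 - δ) w h w ≤ s j s + ‖φ h‖ (1 - u) + (1 - δ) ‖h‖ u`, which is at most
`s j s + max ‖φ h‖ ((1 - δ) ‖h‖)`. The error term is small because
`‖s j‖² = ‖j (1 - u) j‖ ≤ ‖j‖ ‖j - u j‖`, which tends to `0` as `j ∈ ker φ`.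
-/

lemma limsup_le_of_le_add_of_tendsto_zero {ι : Type*} {l : Filter ι} [l.NeBot] {f g : ι → ℝ}
    {M : ℝ} (hf : ∀ i, 0 ≤ f i) (hfg : ∀ i, f i ≤ M + g i) (hg : Tendsto g l (nhds 0)) :
    limsup f l ≤ M := by
  have hMg : Tendsto (fun i => M + g i) l (nhds M) := by simpa using hg.const_add M
  calc limsup f l ≤ limsup (fun i => M + g i) l :=
        limsup_le_limsup (.of_forall hfg) (isCoboundedUnder_le_of_le l hf) hMg.isBoundedUnder_le
    _ = M := hMg.limsup_eq

lemma map_cfcₙ_max_sub_norm_map_eq_zero {A B F : Type*} [NonUnitalCStarAlgebra A]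
    [NonUnitalCStarAlgebra B] [FunLike F A B] [NonUnitalAlgHomClass F ℂ A B] [StarHomClass F A B]
    (φ : F) {a : A} (ha : IsSelfAdjoint a) :
    φ (cfcₙ (fun x : ℝ => max (x - ‖φ a‖) 0) a) = 0 := by
  rw [NonUnitalStarAlgHomClass.map_cfcₙ (S := ℂ) φ _ a (by fun_prop) (by simp)
    (map_continuous φ) ha (ha.map φ)]
  refine (cfcₙ_congr fun x hx => ?_).trans (cfcₙ_zero ℝ (φ a))
  have hx : x ≤ ‖φ a‖ := (Real.le_norm_self x).trans
    (NonUnitalIsometricContinuousFunctionalCalculus.norm_quasispectrum_le (φ a) hx (ha.map φ))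
  simpa using hx

section Unital

variable {A : Type*} [CStarAlgebra A] [PartialOrder A] [StarOrderedRing A]

lemma le_cfc_max_sub_add_smul_one {a : A} (ha : IsSelfAdjoint a) (c : ℝ) :
    a ≤ cfc (fun x : ℝ => max (x - c) 0) a + c • 1 := by
  calc a = cfc (fun x : ℝ => x) a := (cfc_id' ℝ a).symm
    _ ≤ cfc (fun x : ℝ => max (x - c) 0 + c) a :=
        cfc_mono fun x _ => by linarith [le_max_left (x - c) 0]
    _ = cfc (fun x : ℝ => max (x - c) 0) a + c • 1 := by
        rw [cfc_add_const .., Algebra.algebraMap_eq_smul_one]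

lemma smul_one_sub_add_smul_le_max_smul_one {v : A} (hv₀ : 0 ≤ v) (hv₁ : v ≤ 1) (c d : ℝ) :
    c • (1 - v) + d • v ≤ max c d • (1 : A) :=
  calc c • (1 - v) + d • v ≤ max c d • (1 - v) + max c d • v := by
        gcongr
        · exact le_max_left c d
        · exact le_max_right c d
    _ = max c d • (1 : A) := by rw [← smul_add, sub_add_cancel]

lemma norm_smul_one_le {M : ℝ} (hM : 0 ≤ M) : ‖M • (1 : A)‖ ≤ M := by
  rw [norm_smul, Real.norm_of_nonneg hM]
  exact mul_le_of_le_one_right hM ((CStarAlgebra.norm_le_one_iff_of_nonneg 1).2 le_rfl)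

lemma sqrt_one_sub_conj_add_smul_sqrt_conj_le {v a b : A} (hv₀ : 0 ≤ v) (hv₁ : v ≤ 1)
    (ha : IsSelfAdjoint a) {c t : ℝ} (ht : 0 ≤ t) (hab : a ≤ b + c • 1) :
    CFC.sqrt (1 - v) * a * CFC.sqrt (1 - v) + t • (CFC.sqrt v * a * CFC.sqrt v) ≤
      CFC.sqrt (1 - v) * b * CFC.sqrt (1 - v) + max c (t * ‖a‖) • 1 := by
  set s := CFC.sqrt (1 - v)
  set w := CFC.sqrt v
  have hs : IsSelfAdjoint s := .of_nonneg (CFC.sqrt_nonneg _)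
  have hw : IsSelfAdjoint w := .of_nonneg (CFC.sqrt_nonneg _)
  have hss : s * s = 1 - v := CFC.sqrt_mul_sqrt_self _ (sub_nonneg.2 hv₁)
  have hww : w * w = v := CFC.sqrt_mul_sqrt_self _ hv₀
  have hsa : s * a * s ≤ s * b * s + c • (1 - v) := by
    calc s * a * s ≤ s * (b + c • 1) * s := hs.conjugate_le_conjugate hab
      _ = s * b * s + c • (1 - v) := by
        rw [mul_add, add_mul, mul_smul_comm, smul_mul_assoc, mul_one, hss]
  have hwa : t • (w * a * w) ≤ (t * ‖a‖) • v := by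
    have : w * a * w ≤ ‖a‖ • v := by
      simpa only [hw.star_eq, hww] using
        CStarAlgebra.star_left_conjugate_le_norm_smul (a := w) ha
    rw [mul_smul]
    exact smul_le_smul_of_nonneg_left this ht
  calc s * a * s + t • (w * a * w) ≤ s * b * s + (c • (1 - v) + (t * ‖a‖) • v) := by
        rw [← add_assoc]; exact add_le_add hsa hwa
    _ ≤ s * b * s + max c (t * ‖a‖) • 1 := by
        gcongr; exact smul_one_sub_add_smul_le_max_smul_one hv₀ hv₁ c _

lemma norm_sqrt_one_sub_conj_add_smul_sqrt_conj_le {v a b : A} (hv₀ : 0 ≤ v) (hv₁ : v ≤ 1)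
    (ha : 0 ≤ a) {c t : ℝ} (ht : 0 ≤ t) (hab : a ≤ b + c • 1) :
    ‖CFC.sqrt (1 - v) * a * CFC.sqrt (1 - v) + t • (CFC.sqrt v * a * CFC.sqrt v)‖ ≤
      max c (t * ‖a‖) + ‖CFC.sqrt (1 - v) * b * CFC.sqrt (1 - v)‖ := by
  have hM : 0 ≤ max c (t * ‖a‖) := (mul_nonneg ht (norm_nonneg a)).trans (le_max_right _ _)
  have hnonneg :
      0 ≤ CFC.sqrt (1 - v) * a * CFC.sqrt (1 - v) + t • (CFC.sqrt v * a * CFC.sqrt v) :=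
    add_nonneg (conjugate_nonneg_of_nonneg ha (CFC.sqrt_nonneg _))
      (smul_nonneg ht (conjugate_nonneg_of_nonneg ha (CFC.sqrt_nonneg _)))
  calc _ ≤ ‖CFC.sqrt (1 - v) * b * CFC.sqrt (1 - v) + max c (t * ‖a‖) • 1‖ :=
        CStarAlgebra.norm_le_norm_of_nonneg_of_le hnonneg
          (sqrt_one_sub_conj_add_smul_sqrt_conj_le hv₀ hv₁ ha.isSelfAdjoint ht hab)
    _ ≤ _ := by
        rw [add_comm (max _ _)]
        exact (norm_add_le _ _).trans (by gcongr; exact norm_smul_one_le hM)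

lemma norm_sqrt_one_sub_conj_le {v b : A} (hv₀ : 0 ≤ v) (hv₁ : v ≤ 1) (hb : IsSelfAdjoint b) :
    ‖CFC.sqrt (1 - v) * b * CFC.sqrt (1 - v)‖ ≤ √(‖b‖ * ‖(1 - v) * b‖) := by
  set s := CFC.sqrt (1 - v)
  have hs : IsSelfAdjoint s := .of_nonneg (CFC.sqrt_nonneg _)
  have hs_le : ‖s‖ ≤ 1 := by
    rw [CFC.norm_sqrt _ (sub_nonneg.2 hv₁), Real.sqrt_le_one,
      CStarAlgebra.norm_le_one_iff_of_nonneg _ (sub_nonneg.2 hv₁)]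
    exact sub_le_self 1 hv₀
  have hsb : ‖s * b‖ ^ 2 ≤ ‖b‖ * ‖(1 - v) * b‖ := by
    calc ‖s * b‖ ^ 2 = ‖b * ((s * s) * b)‖ := by
          rw [sq, ← CStarRing.norm_star_mul_self, star_mul, hs.star_eq, hb.star_eq]
          simp only [mul_assoc]
      _ ≤ ‖b‖ * ‖(1 - v) * b‖ := by
          rw [CFC.sqrt_mul_sqrt_self _ (sub_nonneg.2 hv₁)]; exact norm_mul_le _ _
  calc ‖s * b * s‖ ≤ ‖s * b‖ * ‖s‖ := norm_mul_le _ _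
    _ ≤ ‖s * b‖ := mul_le_of_le_one_right (norm_nonneg _) hs_le
    _ ≤ √(‖b‖ * ‖(1 - v) * b‖) := Real.le_sqrt_of_sq_le hsb

end Unital

theorem approxUnit_fix_norm_general
    {A B : Type} [NonUnitalCStarAlgebra A] [PartialOrder A] [StarOrderedRing A]
    [NonUnitalCStarAlgebra B]
    (φ : A →⋆ₙₐ[ℂ] B)
    {Λ : Type} [Preorder Λ] [IsDirected Λ (· ≤ ·)] [Nonempty Λ]
    (u : Λ → A)
    (hpos : ∀ l, 0 ≤ u l)
    (hle1 : ∀ l, (u l : A⁺¹) ≤ 1)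
    (happrox : ∀ x : A, φ x = 0 → Tendsto (fun l => ‖u l * x - x‖) atTop (nhds 0))
    (h : A) (hh : 0 ≤ h) (δ : ℝ) (hδ₁ : δ ≤ 1) :
    limsup (fun l =>
        ‖CFC.sqrt ((1 : A⁺¹) - (u l : A⁺¹)) * (h : A⁺¹) * CFC.sqrt ((1 : A⁺¹) - (u l : A⁺¹)) +
          (1 - δ) • (CFC.sqrt ((u l : A⁺¹)) * (h : A⁺¹) * CFC.sqrt ((u l : A⁺¹)))‖) atTop
      ≤ max ‖φ h‖ ((1 - δ) * ‖h‖) := by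
  set j := cfcₙ (fun x : ℝ => max (x - ‖φ h‖) 0) h
  have hφj : φ j = 0 := map_cfcₙ_max_sub_norm_map_eq_zero φ hh.isSelfAdjoint
  have hhj : (h : A⁺¹) ≤ j + ‖φ h‖ • 1 := by
    rw [Unitization.real_cfcₙ_eq_cfc_inr h _ (by simp)]
    exact le_cfc_max_sub_add_smul_one (hh.isSelfAdjoint.inr ℂ) _
  have hj : IsSelfAdjoint (j : A⁺¹) :=
    (IsSelfAdjoint.of_nonneg (cfcₙ_nonneg fun _ _ => le_max_right _ _)).inr ℂ
  have hu₀ l : (0 : A⁺¹) ≤ u l := Unitization.inr_nonneg_iff.2 (hpos l)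
  have herr : Tendsto (fun l => √(‖j‖ * ‖u l * j - j‖)) atTop (nhds 0) := by
    simpa using ((happrox j hφj).const_mul ‖j‖).sqrt
  refine limsup_le_of_le_add_of_tendsto_zero (fun _ => norm_nonneg _) (fun l => ?_) herr
  have hju : ‖((1 : A⁺¹) - u l) * j‖ = ‖u l * j - j‖ := by
    rw [sub_mul, one_mul, ← Unitization.inr_mul ℂ, ← Unitization.inr_sub ℂ,
      Unitization.norm_inr, norm_sub_rev]
  calc _ ≤ max ‖φ h‖ ((1 - δ) * ‖(h : A⁺¹)‖) +
        ‖CFC.sqrt (1 - (u l : A⁺¹)) * j * CFC.sqrt (1 - (u l : A⁺¹))‖ :=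
        norm_sqrt_one_sub_conj_add_smul_sqrt_conj_le (hu₀ l) (hle1 l)
          (Unitization.inr_nonneg_iff.2 hh) (sub_nonneg.2 hδ₁) hhj
    _ ≤ max ‖φ h‖ ((1 - δ) * ‖(h : A⁺¹)‖) +
        √(‖(j : A⁺¹)‖ * ‖((1 : A⁺¹) - u l) * j‖) := by
        gcongr; exact norm_sqrt_one_sub_conj_le (hu₀ l) (hle1 l) hj
    _ = _ := by rw [hju, Unitization.norm_inr, Unitization.norm_inr]

/-- If `u` is an approximate unit for `ker φ`, then for positive `h` and
`0 ≤ δ ≤ 1`,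
`limsup ‖(1-u)^{1/2} h (1-u)^{1/2} + (1-δ) u^{1/2} h u^{1/2}‖ ≤ max ‖φ h‖ ((1-δ)‖h‖)`. -/
theorem approxUnit_fix_norm
    {A B : Type} [NonUnitalCStarAlgebra A] [PartialOrder A] [StarOrderedRing A]
    [NonUnitalCStarAlgebra B]
    (φ : A →⋆ₙₐ[ℂ] B) (hφ : Function.Surjective φ)
    {Λ : Type} [Preorder Λ] [IsDirected Λ (· ≤ ·)] [Nonempty Λ]
    (u : Λ → A)
    (hker : ∀ l, φ (u l) = 0)
    (hpos : ∀ l, 0 ≤ u l)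
    (hle1 : ∀ l, (u l : A⁺¹) ≤ 1)
    (happrox : ∀ x : A, φ x = 0 → Tendsto (fun l => ‖u l * x - x‖) atTop (nhds 0))
    (h : A) (hh : 0 ≤ h) (δ : ℝ) (hδ₀ : 0 ≤ δ) (hδ₁ : δ ≤ 1) :
    limsup (fun l =>
        ‖CFC.sqrt ((1 : A⁺¹) - (u l : A⁺¹)) * (h : A⁺¹) * CFC.sqrt ((1 : A⁺¹) - (u l : A⁺¹)) +
          (1 - δ) • (CFC.sqrt ((u l : A⁺¹)) * (h : A⁺¹) * CFC.sqrt ((u l : A⁺¹)))‖) atTop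
      ≤ max ‖φ h‖ ((1 - δ) * ‖h‖) :=
  approxUnit_fix_norm_general φ u hpos hle1 happrox h hh δ hδ₁
end

section
/- Let A and B be C*-algebras, let φ : A → B be a surjective *-homomorphism, and let (u_λ)_{λ∈Λ} be an approximate unit for ker φ that is quasicentral for A. Then for every a ∈ A and every real δ with 0 ≤ δ ≤ 1, one has limsup_λ ‖a·(1 − δ·u_λ)^{1/2}‖ ≤ max(‖φ(a)‖, (1 − δ)^{1/2}·‖a‖). -/
open scoped CStarAlgebra
open Filter Topology Set

/-!
Write `V = (1 - δ u)^{1/2}` and `P = a⋆a`, so that `‖a V‖² = ‖V P V‖`. For `r > ‖φ a‖²`, a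
continuous cutoff `f` with `f = 0` on `(-∞, ‖φ a‖²]` and `f = 1` on `[r, ∞)` gives `e = f(P)` in
`ker φ` with `e ≤ 1` and `P ≤ r + c e`, where `c = (‖a‖² - r)⁺`. As `u e → e`, for each fixed `n`
eventually `e ≤ u^{2n} + o(1)`, and `V u^{2n} V = u^{2n} (1 - δ u) ≤ (1 - δ) u + 1/(2n+1)`
because `t^m (1 - t) ≤ 1/(m+1)` on `[0, 1]`. Hence `V P V ≤ r' + β u` with `r' → r` and
`r' + β → (1 - δ) (r + c)`, and since `0 ≤ u ≤ 1`, `‖V P V‖ ≤ max r' (r' + β)`. Letting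
`r ↓ ‖φ a‖²` gives `limsup ‖a V‖² ≤ max ‖φ a‖² ((1 - δ) ‖a‖²)`.
-/

lemma pow_mul_one_sub_le_one_div_succ (m : ℕ) {t : ℝ} (ht₀ : 0 ≤ t) (ht₁ : t ≤ 1) :
    t ^ m * (1 - t) ≤ 1 / (m + 1) := by
  rw [le_div_iff₀ (by positivity)]
  calc t ^ m * (1 - t) * (m + 1) = (∑ _i ∈ Finset.range (m + 1), t ^ m) * (1 - t) := by
        simp only [Finset.sum_const, Finset.card_range, nsmul_eq_mul]; push_cast; ring
    _ ≤ (∑ i ∈ Finset.range (m + 1), t ^ i) * (1 - t) := by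
        refine mul_le_mul_of_nonneg_right (Finset.sum_le_sum fun i hi => ?_) (sub_nonneg.mpr ht₁)
        exact pow_le_pow_of_le_one ht₀ ht₁ (Finset.mem_range_succ_iff.mp hi)
    _ = 1 - t ^ (m + 1) := geom_sum_mul_neg t (m + 1)
    _ ≤ 1 := sub_le_self _ (by positivity)

lemma pow_sub_mul_pow_succ_le (m : ℕ) {δ t : ℝ} (hδ : δ ≤ 1) (ht₀ : 0 ≤ t) (ht₁ : t ≤ 1) :
    t ^ m - δ * t ^ (m + 1) ≤ (1 - δ) * t + 1 / (m + 1) := by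
  have h := pow_mul_one_sub_le_one_div_succ m ht₀ ht₁
  have : t ^ (m + 1) ≤ t := pow_le_of_le_one ht₀ ht₁ (by omega)
  nlinarith [mul_le_mul_of_nonneg_left this (sub_nonneg.mpr hδ), pow_succ t m]

section NormedRing

variable {R : Type*} [NormedRing R]

lemma norm_sub_pow_mul_mul_pow_le {u : R} (hu : ‖u‖ ≤ 1) (e : R) (n : ℕ) :
    ‖e - u ^ n * e * u ^ n‖ ≤ n * ‖e - u * e * u‖ := by
  induction n with
  | zero => simp
  | succ n ih =>
    have hsplit : e - u ^ (n + 1) * e * u ^ (n + 1)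
        = (e - u * e * u) + u * (e - u ^ n * e * u ^ n) * u := by
      rw [pow_succ' u n]
      nth_rw 2 [(Commute.self_pow u n).eq]
      noncomm_ring
    have hconj : ‖u * (e - u ^ n * e * u ^ n) * u‖ ≤ ‖e - u ^ n * e * u ^ n‖ :=
      calc _ ≤ ‖u‖ * ‖e - u ^ n * e * u ^ n‖ * ‖u‖ := norm_mul₃_le
        _ ≤ 1 * ‖e - u ^ n * e * u ^ n‖ * 1 := by gcongr
        _ = _ := by ring
    calc _ ≤ ‖e - u * e * u‖ + ‖u * (e - u ^ n * e * u ^ n) * u‖ := hsplit ▸ norm_add_le _ _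
      _ ≤ ‖e - u * e * u‖ + n * ‖e - u * e * u‖ := by gcongr; exact hconj.trans ih
      _ = (n + 1 : ℕ) * ‖e - u * e * u‖ := by push_cast; ring

lemma norm_mul_sq_eq_norm_conj [StarRing R] [CStarRing R] (x : R) {v : R} (hv : IsSelfAdjoint v) :
    ‖x * v‖ ^ 2 = ‖v * (star x * x) * v‖ := by
  rw [sq, ← CStarRing.norm_star_mul_self, star_mul, hv.star_eq, mul_assoc, mul_assoc, mul_assoc]

variable [StarRing R] [NormedStarGroup R]

lemma norm_sub_mul_mul_le {u e : R} (hu : IsSelfAdjoint u) (he : IsSelfAdjoint e)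
    (hu₁ : ‖u‖ ≤ 1) : ‖e - u * e * u‖ ≤ 2 * ‖u * e - e‖ := by
  have hstar : ‖e * u - e‖ = ‖u * e - e‖ := by
    rw [← norm_star (u * e - e), star_sub, star_mul, hu.star_eq, he.star_eq]
  calc ‖e - u * e * u‖ = ‖-(u * e - e) - u * (e * u - e)‖ := by congr 1; noncomm_ring
    _ ≤ ‖u * e - e‖ + ‖u‖ * ‖e * u - e‖ :=
        (norm_sub_le _ _).trans (by rw [norm_neg]; gcongr; exact norm_mul_le _ _)
    _ ≤ 2 * ‖u * e - e‖ := by rw [hstar]; nlinarith [norm_nonneg (u * e - e)]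

lemma tendsto_norm_sub_pow_mul_mul_pow {ι : Type*} {l : Filter ι} {u : ι → R} {e : R}
    (hu : ∀ i, IsSelfAdjoint (u i)) (hu₁ : ∀ i, ‖u i‖ ≤ 1) (he : IsSelfAdjoint e)
    (h : Tendsto (fun i => ‖u i * e - e‖) l (𝓝 0)) (n : ℕ) :
    Tendsto (fun i => ‖e - u i ^ n * e * u i ^ n‖) l (𝓝 0) := by
  refine squeeze_zero (fun _ => norm_nonneg _) (fun i => ?_)
    (by simpa using (h.const_mul 2).const_mul (n : ℝ))
  exact (norm_sub_pow_mul_mul_pow_le (hu₁ i) e n).trans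
    (mul_le_mul_of_nonneg_left (norm_sub_mul_mul_le (hu i) he (hu₁ i)) n.cast_nonneg)

end NormedRing

section UnitalCStarAlgebra

variable {C : Type*} [CStarAlgebra C] [PartialOrder C] [StarOrderedRing C]

lemma pow_sub_smul_pow_succ_le {u : C} (hu₀ : 0 ≤ u) (hu₁ : u ≤ 1) {δ : ℝ} (hδ : δ ≤ 1)
    (m : ℕ) : u ^ m - δ • u ^ (m + 1) ≤ (1 - δ) • u + (1 / (m + 1) : ℝ) • 1 := by
  have hspec : ∀ t ∈ spectrum ℝ u, t ≤ 1 :=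
    (le_algebraMap_iff_spectrum_le (R := ℝ) (r := 1) hu₀.isSelfAdjoint).mp (by rwa [map_one])
  have hlhs : u ^ m - δ • u ^ (m + 1) = cfc (fun t : ℝ => t ^ m - δ * t ^ (m + 1)) u := by
    rw [cfc_sub .., cfc_const_mul .., cfc_pow_id (R := ℝ) u, cfc_pow_id (R := ℝ) u]
  have hrhs : (1 - δ) • u + (1 / (m + 1) : ℝ) • (1 : C)
      = cfc (fun t : ℝ => (1 - δ) * t + 1 / (m + 1)) u := by
    rw [cfc_add .., cfc_const_mul .., cfc_id' ℝ u, cfc_const .., Algebra.algebraMap_eq_smul_one]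
  rw [hlhs, hrhs]
  exact cfc_mono fun t ht =>
    pow_sub_mul_pow_succ_le m hδ (spectrum_nonneg_of_nonneg hu₀ ht) (hspec t ht)

variable {u : C} {δ : ℝ}

lemma one_sub_smul_nonneg (hu₁ : u ≤ 1) (hδ₀ : 0 ≤ δ) (hδ₁ : δ ≤ 1) : 0 ≤ 1 - δ • u := by
  have : 1 - δ • u = (1 - δ) • (1 : C) + δ • (1 - u) := by
    rw [smul_sub, sub_smul, one_smul]; abel
  rw [this]
  exact add_nonneg (smul_nonneg (by linarith) zero_le_one) (smul_nonneg hδ₀ (sub_nonneg.mpr hu₁))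

lemma sqrt_one_sub_smul_mul_self (hu₁ : u ≤ 1) (hδ₀ : 0 ≤ δ) (hδ₁ : δ ≤ 1) :
    CFC.sqrt (1 - δ • u) * CFC.sqrt (1 - δ • u) = 1 - δ • u :=
  CFC.sqrt_mul_sqrt_self _ (one_sub_smul_nonneg hu₁ hδ₀ hδ₁)

lemma commute_sqrt_one_sub_smul (u : C) (δ : ℝ) : Commute (CFC.sqrt (1 - δ • u)) u :=
  ((Commute.one_left u).sub_left ((Commute.refl u).smul_left δ)).cfcₙ_nnreal _

lemma sqrt_one_sub_smul_conj_le {x : C} (hu₀ : 0 ≤ u) (hu₁ : u ≤ 1) (hδ₀ : 0 ≤ δ) (hδ₁ : δ ≤ 1)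
    {m : ℕ} {w : ℝ} (hw : 0 ≤ w) (hx : x ≤ u ^ m + w • 1) :
    CFC.sqrt (1 - δ • u) * x * CFC.sqrt (1 - δ • u) ≤ (1 - δ) • u + (1 / (m + 1) + w) • 1 := by
  set V := CFC.sqrt (1 - δ • u)
  have hVV : V * V = 1 - δ • u := sqrt_one_sub_smul_mul_self hu₁ hδ₀ hδ₁
  have hconj : V * (u ^ m + w • 1) * V = (u ^ m - δ • u ^ (m + 1)) + w • (1 - δ • u) := by
    rw [mul_add, add_mul, ((commute_sqrt_one_sub_smul u δ).pow_right m).eq, mul_assoc, hVV,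
      mul_smul_comm, smul_mul_assoc, mul_one, hVV, mul_sub, mul_one, mul_smul_comm, ← pow_succ]
  calc V * x * V ≤ V * (u ^ m + w • 1) * V :=
        conjugate_le_conjugate_of_nonneg hx (CFC.sqrt_nonneg _)
    _ = (u ^ m - δ • u ^ (m + 1)) + w • (1 - δ • u) := hconj
    _ ≤ ((1 - δ) • u + (1 / (m + 1) : ℝ) • 1) + w • 1 := by
        gcongr
        · exact pow_sub_smul_pow_succ_le hu₀ hu₁ hδ₁ m
        · exact sub_le_self _ (smul_nonneg hδ₀ hu₀)
    _ = (1 - δ) • u + (1 / (m + 1) + w) • 1 := by rw [add_smul]; abel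

lemma norm_le_max_of_le_smul_one_add_smul {x : C} (hx : 0 ≤ x) (hu₀ : 0 ≤ u) (hu₁ : u ≤ 1)
    {α β : ℝ} (hα : 0 ≤ α) (h : x ≤ α • 1 + β • u) : ‖x‖ ≤ max α (α + β) := by
  rcases le_total β 0 with hβ | hβ
  · refine ((CStarAlgebra.norm_le_iff_le_algebraMap x hα hx).mpr ?_).trans (le_max_left _ _)
    rw [Algebra.algebraMap_eq_smul_one]
    exact h.trans (add_le_of_nonpos_right (smul_nonpos_of_nonpos_of_nonneg hβ hu₀))
  · refine ((CStarAlgebra.norm_le_iff_le_algebraMap x (by positivity) hx).mpr ?_).trans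
      (le_max_right _ _)
    rw [Algebra.algebraMap_eq_smul_one, add_smul]
    exact h.trans (by gcongr)

lemma le_pow_add_norm_sub_smul_one {e : C} (he : IsSelfAdjoint e) (he₁ : e ≤ 1)
    (hu : IsSelfAdjoint u) (n : ℕ) :
    e ≤ u ^ (2 * n) + ‖e - u ^ n * e * u ^ n‖ • 1 := by
  have hsa : IsSelfAdjoint (e - u ^ n * e * u ^ n) := he.sub (he.conjugate_self (hu.pow n))
  calc e = u ^ n * e * u ^ n + (e - u ^ n * e * u ^ n) := by abel
    _ ≤ u ^ n * 1 * u ^ n + ‖e - u ^ n * e * u ^ n‖ • 1 := by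
        gcongr
        · exact (hu.pow n).conjugate_le_conjugate he₁
        · simpa [Algebra.algebraMap_eq_smul_one] using hsa.le_algebraMap_norm_self
    _ = u ^ (2 * n) + ‖e - u ^ n * e * u ^ n‖ • 1 := by rw [mul_one, ← pow_add, two_mul]

lemma norm_sqrt_one_sub_smul_conj_le {P e : C} (hu₀ : 0 ≤ u) (hu₁ : u ≤ 1) (hδ₀ : 0 ≤ δ)
    (hδ₁ : δ ≤ 1) (hP : 0 ≤ P) {r c : ℝ} (hr : 0 ≤ r) (hc : 0 ≤ c) (hPe : P ≤ r • 1 + c • e)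
    {m : ℕ} {w : ℝ} (hw : 0 ≤ w) (he : e ≤ u ^ m + w • 1) :
    ‖CFC.sqrt (1 - δ • u) * P * CFC.sqrt (1 - δ • u)‖
      ≤ max r ((1 - δ) * (r + c)) + c * (1 / (m + 1) + w) := by
  set V := CFC.sqrt (1 - δ • u)
  have hVV : V * V = 1 - δ • u := sqrt_one_sub_smul_mul_self hu₁ hδ₀ hδ₁
  have hVeV := sqrt_one_sub_smul_conj_le hu₀ hu₁ hδ₀ hδ₁ hw he
  have hVPV : V * P * V ≤ (r + c * (1 / (m + 1) + w)) • 1 + (c * (1 - δ) - r * δ) • u :=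
    calc V * P * V ≤ V * (r • 1 + c • e) * V :=
          conjugate_le_conjugate_of_nonneg hPe (CFC.sqrt_nonneg _)
      _ = r • (V * V) + c • (V * e * V) := by
          simp only [mul_add, add_mul, mul_smul_comm, smul_mul_assoc, mul_one]
      _ ≤ r • (V * V) + c • ((1 - δ) • u + (1 / (m + 1) + w) • 1) := by gcongr
      _ = (r + c * (1 / (m + 1) + w)) • 1 + (c * (1 - δ) - r * δ) • u := by rw [hVV]; module
  calc ‖V * P * V‖ ≤ max _ _ :=
        norm_le_max_of_le_smul_one_add_smul (conjugate_nonneg_of_nonneg hP (CFC.sqrt_nonneg _))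
          hu₀ hu₁ (by positivity) hVPV
    _ = max r ((1 - δ) * (r + c)) + c * (1 / (m + 1) + w) := by
        rw [← max_add_add_right]; ring_nf

end UnitalCStarAlgebra

section Quotient

variable {A B : Type*} [NonUnitalCStarAlgebra A] [NonUnitalCStarAlgebra B] (φ : A →⋆ₙₐ[ℂ] B)

lemma exists_ker_le_smul_one_add_smul {p : A} (hp : IsSelfAdjoint p) {r : ℝ} (hr : ‖φ p‖ < r) :
    ∃ e : A, φ e = 0 ∧ IsSelfAdjoint e ∧ (e : A⁺¹) ≤ 1 ∧
      (p : A⁺¹) ≤ r • 1 + max (‖p‖ - r) 0 • (e : A⁺¹) := by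
  obtain ⟨f, hf_zero, hf_one, hf_mem⟩ := exists_continuous_zero_one_of_isClosed isClosed_Iic
    (isClosed_Ici (a := r)) (Iic_disjoint_Ici.mpr hr.not_ge)
  have hf₀ : f 0 = 0 := hf_zero (mem_Iic.mpr (norm_nonneg (φ p)))
  refine ⟨cfcₙ f p, ?_, cfcₙ_predicate f p, ?_, ?_⟩
  · rw [φ.map_cfcₙ f p f.continuous.continuousOn hf₀, cfcₙ_congr (g := 0), cfcₙ_zero]
    intro t ht
    exact hf_zero ((Real.le_norm_self t).trans
      (NonUnitalIsometricContinuousFunctionalCalculus.norm_quasispectrum_le _ ht (hp.map φ)))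
  · rw [Unitization.real_cfcₙ_eq_cfc_inr p f hf₀]
    exact cfc_le_one f _ fun t _ => (hf_mem t).2
  · rw [Unitization.real_cfcₙ_eq_cfc_inr p f hf₀, ← Algebra.algebraMap_eq_smul_one,
      ← cfc_const r (p : A⁺¹), ← cfc_smul .., ← cfc_add ..]
    conv_lhs => rw [← cfc_id' ℝ (p : A⁺¹)]
    refine cfc_mono fun t ht => ?_
    have htp : t ≤ ‖p‖ := (Real.le_norm_self t).trans
      ((spectrum.norm_le_norm_of_mem ht).trans (Unitization.norm_inr p).le)
    have hc : 0 ≤ max (‖p‖ - r) 0 := le_max_right _ _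
    rcases le_total r t with hrt | htr
    · rw [smul_eq_mul, show f t = 1 from hf_one (mem_Ici.mpr hrt)]
      linarith [le_max_left (‖p‖ - r) 0]
    · rw [smul_eq_mul]
      nlinarith [(hf_mem t).1]

lemma eventually_sq_norm_mul_sqrt_one_sub_smul_le {ι : Type*} {l : Filter ι} {u : ι → A}
    (hu₀ : ∀ i, 0 ≤ (u i : A⁺¹)) (hu₁ : ∀ i, (u i : A⁺¹) ≤ 1)
    (happrox : ∀ x : A, φ x = 0 → Tendsto (fun i => ‖u i * x - x‖) l (𝓝 0))
    (a : A) {δ : ℝ} (hδ₀ : 0 ≤ δ) (hδ₁ : δ ≤ 1) {r : ℝ} (hr : ‖φ a‖ ^ 2 < r) {ε : ℝ}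
    (hε : 0 < ε) :
    ∀ᶠ i in l, ‖(a : A⁺¹) * CFC.sqrt (1 - δ • (u i : A⁺¹))‖ ^ 2
      ≤ max r ((1 - δ) * max (‖a‖ ^ 2) r) + ε := by
  obtain ⟨e, heφ, he, he₁, hPe⟩ := exists_ker_le_smul_one_add_smul φ
    (IsSelfAdjoint.star_mul_self a) (r := r)
    (by rwa [map_mul, map_star, CStarRing.norm_star_mul_self, ← sq])
  rw [CStarRing.norm_star_mul_self, ← sq, Unitization.inr_mul, Unitization.inr_star] at hPe
  set c := max (‖a‖ ^ 2 - r) 0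
  have hrc : r + c = max (‖a‖ ^ 2) r := by rw [← max_add_add_left, add_sub_cancel, add_zero]
  obtain ⟨n, hn⟩ : ∃ n : ℕ, c * (1 / ((2 * n : ℕ) + 1)) < ε / 2 := by
    obtain ⟨n, hn⟩ := exists_nat_gt (c / (ε / 2))
    refine ⟨n, ?_⟩
    rw [div_lt_iff₀ (by positivity)] at hn
    rw [mul_one_div, div_lt_iff₀ (by positivity)]
    push_cast
    nlinarith
  have hw := tendsto_norm_sub_pow_mul_mul_pow (fun i => (hu₀ i).isSelfAdjoint)
    (fun i => (CStarAlgebra.norm_le_one_iff_of_nonneg _ (hu₀ i)).mpr (hu₁ i)) (he.inr ℂ)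
    (by simpa only [← Unitization.inr_mul, ← Unitization.inr_sub, Unitization.norm_inr]
      using happrox e heφ) n
  filter_upwards [(hw.const_mul c).eventually_lt_const (u := ε / 2) (by rw [mul_zero]; positivity)]
    with i hi
  have hbound := norm_sqrt_one_sub_smul_conj_le (hu₀ i) (hu₁ i) hδ₀ hδ₁
    (star_mul_self_nonneg _) ((sq_nonneg _).trans_lt hr).le
    (le_max_right _ _) hPe (norm_nonneg _)
    (le_pow_add_norm_sub_smul_one (he.inr ℂ) he₁ (hu₀ i).isSelfAdjoint n)
  rw [← norm_mul_sq_eq_norm_conj _ (CFC.sqrt_nonneg _).isSelfAdjoint, hrc] at hbound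
  calc _ ≤ _ := hbound
    _ = max r ((1 - δ) * max (‖a‖ ^ 2) r) + (c * (1 / ((2 * n : ℕ) + 1))
          + c * ‖(e : A⁺¹) - (u i : A⁺¹) ^ n * e * (u i : A⁺¹) ^ n‖) := by ring
    _ ≤ max r ((1 - δ) * max (‖a‖ ^ 2) r) + (ε / 2 + ε / 2) := by gcongr
    _ = max r ((1 - δ) * max (‖a‖ ^ 2) r) + ε := by ring

end Quotient

theorem quasicentral_approxUnit_fix_norm_general
    {A B : Type} [NonUnitalCStarAlgebra A] [PartialOrder A] [StarOrderedRing A]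
    [NonUnitalCStarAlgebra B]
    (φ : A →⋆ₙₐ[ℂ] B)
    {Λ : Type} [Preorder Λ] [IsDirected Λ (· ≤ ·)] [Nonempty Λ]
    (u : Λ → A)
    (hpos : ∀ l, 0 ≤ u l)
    (hle1 : ∀ l, (u l : A⁺¹) ≤ 1)
    (happrox : ∀ x : A, φ x = 0 → Tendsto (fun l => ‖u l * x - x‖) atTop (nhds 0))
    (a : A) (δ : ℝ) (hδ₀ : 0 ≤ δ) (hδ₁ : δ ≤ 1) :
    limsup (fun l => ‖(a : A⁺¹) * CFC.sqrt ((1 : A⁺¹) - δ • (u l : A⁺¹))‖) atTop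
      ≤ max ‖φ a‖ (Real.sqrt (1 - δ) * ‖a‖) := by
  set T := max ‖φ a‖ (Real.sqrt (1 - δ) * ‖a‖)
  have hT : 0 ≤ T := (norm_nonneg _).trans (le_max_left _ _)
  have hT₁ : ‖φ a‖ ^ 2 ≤ T ^ 2 := pow_le_pow_left₀ (norm_nonneg _) (le_max_left _ _) 2
  have hT₂ : (1 - δ) * ‖a‖ ^ 2 ≤ T ^ 2 :=
    calc (1 - δ) * ‖a‖ ^ 2 = (√(1 - δ) * ‖a‖) ^ 2 := by rw [mul_pow, Real.sq_sqrt (by linarith)]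
      _ ≤ T ^ 2 := pow_le_pow_left₀ (by positivity) (le_max_right _ _) 2
  refine le_of_forall_pos_le_add fun η hη => limsup_le_of_le
    (isCoboundedUnder_le_of_le atTop fun l => norm_nonneg _) ?_
  have hε : 0 < η ^ 2 / 3 := by positivity
  filter_upwards [eventually_sq_norm_mul_sqrt_one_sub_smul_le φ
    (fun l => Unitization.inr_nonneg_iff.mpr (hpos l)) hle1 happrox a hδ₀ hδ₁
    (lt_add_of_pos_right (‖φ a‖ ^ 2) hε) hε] with l hl
  have hmax : max (‖φ a‖ ^ 2 + η ^ 2 / 3) ((1 - δ) * max (‖a‖ ^ 2) (‖φ a‖ ^ 2 + η ^ 2 / 3))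
      ≤ T ^ 2 + η ^ 2 / 3 := by
    rw [mul_max_of_nonneg _ _ (by linarith)]
    exact max_le (by linarith) (max_le (by linarith) (by nlinarith))
  refine le_of_pow_le_pow_left₀ two_ne_zero (by positivity) (hl.trans ?_)
  nlinarith

/-- If `u` is a quasicentral approximate unit for `ker φ`, then for any `a`
and `0 ≤ δ ≤ 1`, `limsup ‖a (1 - δ u)^{1/2}‖ ≤ max ‖φ a‖ ((1-δ)^{1/2} ‖a‖)`. -/
theorem quasicentral_approxUnit_fix_norm
    {A B : Type} [NonUnitalCStarAlgebra A] [PartialOrder A] [StarOrderedRing A]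
    [NonUnitalCStarAlgebra B]
    (φ : A →⋆ₙₐ[ℂ] B) (hφ : Function.Surjective φ)
    {Λ : Type} [Preorder Λ] [IsDirected Λ (· ≤ ·)] [Nonempty Λ]
    (u : Λ → A)
    (hker : ∀ l, φ (u l) = 0)
    (hpos : ∀ l, 0 ≤ u l)
    (hle1 : ∀ l, (u l : A⁺¹) ≤ 1)
    (happrox : ∀ x : A, φ x = 0 → Tendsto (fun l => ‖u l * x - x‖) atTop (nhds 0))
    (hquasi : ∀ a : A, Tendsto (fun l => ‖u l * a - a * u l‖) atTop (nhds 0))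
    (a : A) (δ : ℝ) (hδ₀ : 0 ≤ δ) (hδ₁ : δ ≤ 1) :
    limsup (fun l => ‖(a : A⁺¹) * CFC.sqrt ((1 : A⁺¹) - δ • (u l : A⁺¹))‖) atTop
      ≤ max ‖φ a‖ (Real.sqrt (1 - δ) * ‖a‖) :=
  quasicentral_approxUnit_fix_norm_general φ u hpos hle1 happrox a δ hδ₀ hδ₁
end

section
/- Let φ : A → B be a surjective *-homomorphism of C*-algebras and let C > 0. For all b, c ∈ B with 0 ≤ b ≤ 1, 0 ≤ c ≤ 1, and ‖b·(c² − c)‖ ≤ C, there exist h, p ∈ A with φ(h) = b, φ(p) = c, 0 ≤ h ≤ 1, 0 ≤ p ≤ 1, and ‖h·(p² − p)‖ ≤ C. -/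
/-!
Lift `c` to a positive contraction `p` and put `d = p² - p`. For a lift `a` of `b` the element
`y = a d` has `‖φ y‖ ≤ C`, and the usual proof that quotient norms are attained corrects `y` to
`y - y u(y⋆y)` of norm `≤ C`, where `u(y⋆y) = g (y⋆y)` with `φ g = 0`. Since the correction ends in
`d`, it comes from a new lift `s` of `b` with `‖s d‖ ≤ C`. Finally `h = √(min (s⋆s) 1)` is a positive
contraction lifting `b` with `h² ≤ s⋆s`, so `‖h d‖ ≤ ‖s d‖`.
-/

open scoped CStarAlgebra

/-- The function `u` above: it vanishes on `[0, C²]`, and `t (1 - u t)² = min t C²` for `t ≥ 0`. -/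
noncomputable def damping (C t : ℝ) : ℝ := 1 - C / √(max t (C ^ 2))

lemma continuous_damping {C : ℝ} (hC : 0 < C) : Continuous (damping C) := by
  refine continuous_const.sub (continuous_const.div (by fun_prop) fun t => ?_)
  exact (Real.sqrt_pos.mpr (lt_max_of_lt_right (by positivity))).ne'

lemma damping_eq_zero {C t : ℝ} (hC : 0 < C) (ht : t ≤ C ^ 2) : damping C t = 0 := by
  rw [damping, max_eq_right ht, Real.sqrt_sq hC.le, div_self hC.ne', sub_self]

lemma mul_one_sub_damping_sq_le {C : ℝ} (hC : 0 < C) (t : ℝ) :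
    t * (1 - damping C t) ^ 2 ≤ C ^ 2 := by
  have hm : 0 < max t (C ^ 2) := lt_max_of_lt_right (by positivity)
  rw [damping, sub_sub_cancel, div_pow, Real.sq_sqrt hm.le, mul_div_assoc', div_le_iff₀ hm,
    mul_comm]
  exact mul_le_mul_of_nonneg_left (le_max_left _ _) (by positivity)

lemma damping_div_max_mul {C : ℝ} (hC : 0 < C) (t : ℝ) :
    damping C t / max t (C ^ 2) * t = damping C t := by
  rcases le_or_gt t (C ^ 2) with ht | ht
  · simp [damping_eq_zero hC ht]
  · rw [max_eq_left ht.le, div_mul_cancel₀ _ ((sq_nonneg C).trans_lt ht).ne']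

section

variable {A B : Type*} [NonUnitalCStarAlgebra A] [NonUnitalCStarAlgebra B]

lemma le_norm_of_mem_quasispectrum {a : A} (ha : IsSelfAdjoint a) {x : ℝ}
    (hx : x ∈ quasispectrum ℝ a) : x ≤ ‖a‖ := by
  simpa [cfcₙ_id ℝ a] using (le_abs_self x).trans (norm_apply_le_norm_cfcₙ id a hx)

lemma star_mul_self_sub_mul_cfcₙ (y : A) {f : ℝ → ℝ} (hf : Continuous f) (hf0 : f 0 = 0) :
    star (y - y * cfcₙ f (star y * y)) * (y - y * cfcₙ f (star y * y)) =
      cfcₙ (fun t => t * (1 - f t) ^ 2) (star y * y) := by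
  set K := star y * y
  set M := cfcₙ f K
  have hM : IsSelfAdjoint M := cfcₙ_predicate f K
  have hKM : cfcₙ (fun t => t - f t * t) K = K - M * K := by
    rw [cfcₙ_sub _ _ K, cfcₙ_mul _ _ K, cfcₙ_id' ℝ K]
  have hpoly : (fun t => t * (1 - f t) ^ 2) =
      fun t => (t - f t * t) - (t - f t * t) * f t := by
    ext t; ring
  rw [hpoly, cfcₙ_sub _ _ K, cfcₙ_mul _ _ K, hKM]
  simp only [star_sub, star_mul, hM.star_eq, K]
  noncomm_ring

variable [PartialOrder A] [StarOrderedRing A]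

lemma norm_mul_le_norm_mul_of_star_mul_self_le {a b : A} (hab : star a * a ≤ star b * b)
    (d : A) : ‖a * d‖ ≤ ‖b * d‖ := by
  have hconj : star (a * d) * (a * d) ≤ star (b * d) * (b * d) := by
    simpa only [star_mul, mul_assoc] using star_left_conjugate_le_conjugate hab d
  have := CStarAlgebra.norm_le_norm_of_nonneg_of_le (star_mul_self_nonneg _) hconj
  rw [CStarRing.norm_star_mul_self, CStarRing.norm_star_mul_self] at this
  exact (mul_self_le_mul_self_iff (norm_nonneg _) (norm_nonneg _)).mpr this

lemma cfcₙ_sqrt_min_one_star_mul_self {b : A} (hb0 : 0 ≤ b) (hb1 : ‖b‖ ≤ 1) :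
    cfcₙ (fun t : ℝ => √(min t 1)) (star b * b) = b := by
  have hbb : b * b = cfcₙ (fun t : ℝ => t * t) b := by rw [cfcₙ_mul _ _ b, cfcₙ_id' ℝ b]
  rw [hb0.isSelfAdjoint.star_eq, hbb, ← cfcₙ_comp' _ _ b]
  conv_rhs => rw [← cfcₙ_id' ℝ b]
  refine cfcₙ_congr fun t ht => ?_
  have ht0 : 0 ≤ t := quasispectrum_nonneg_of_nonneg b hb0 t ht
  have ht1 : t ≤ 1 := (le_norm_of_mem_quasispectrum hb0.isSelfAdjoint ht).trans hb1
  rw [min_eq_left (by nlinarith), Real.sqrt_mul_self ht0]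

lemma exists_mem_ker_norm_sub_mul_star_mul_self_le (φ : A →⋆ₙₐ[ℂ] B) {C : ℝ} (hC : 0 < C)
    {y : A} (hy : ‖φ y‖ ≤ C) :
    ∃ g : A, φ g = 0 ∧ ‖y - y * g * (star y * y)‖ ≤ C := by
  have hu := continuous_damping hC
  have hu0 : damping C 0 = 0 := damping_eq_zero hC (sq_nonneg C)
  have hv : Continuous fun t => damping C t / max t (C ^ 2) :=
    hu.div (by fun_prop) fun t => (lt_max_of_lt_right (by positivity)).ne'
  refine ⟨cfcₙ (fun t => damping C t / max t (C ^ 2)) (star y * y), ?_, ?_⟩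
  · have hφK : ‖star (φ y) * φ y‖ ≤ C ^ 2 := by
      rw [CStarRing.norm_star_mul_self, sq]
      exact mul_self_le_mul_self (norm_nonneg _) hy
    rw [φ.map_cfcₙ _ _ hv.continuousOn (by simp [hu0])
        (hφa := by rw [map_mul, map_star]; exact .star_mul_self _), map_mul, map_star,
      ← cfcₙ_const_zero ℝ (star (φ y) * φ y)]
    refine cfcₙ_congr fun t ht => ?_
    rw [damping_eq_zero hC ((le_norm_of_mem_quasispectrum (.star_mul_self _) ht).trans hφK),
      zero_div]
  · have hgK : cfcₙ (fun t => damping C t / max t (C ^ 2)) (star y * y) * (star y * y) =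
        cfcₙ (damping C) (star y * y) := by
      conv_rhs => rw [← funext (damping_div_max_mul hC), cfcₙ_mul _ _ _ hv.continuousOn,
        cfcₙ_id' ℝ (star y * y)]
    have hw : ‖star (y - y * cfcₙ (damping C) (star y * y)) *
        (y - y * cfcₙ (damping C) (star y * y))‖ ≤ C ^ 2 := by
      rw [star_mul_self_sub_mul_cfcₙ y hu hu0]
      refine norm_cfcₙ_le fun t ht => ?_
      have ht0 : 0 ≤ t := quasispectrum_nonneg_of_nonneg _ (star_mul_self_nonneg y) t ht
      rw [Real.norm_of_nonneg (by positivity)]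
      exact mul_one_sub_damping_sq_le hC t
    rw [CStarRing.norm_star_mul_self, sq] at hw
    rw [mul_assoc, hgK]
    exact (mul_self_le_mul_self_iff (norm_nonneg _) hC.le).mpr hw

lemma exists_lift_norm_mul_le (φ : A →⋆ₙₐ[ℂ] B) {C : ℝ} (hC : 0 < C) (a d : A)
    (had : ‖φ (a * d)‖ ≤ C) : ∃ s : A, φ s = φ a ∧ ‖s * d‖ ≤ C := by
  obtain ⟨g, hg, hnorm⟩ := exists_mem_ker_norm_sub_mul_star_mul_self_le φ hC had
  -- `s * d = y - y * g * (star y * y)` for `y = a * d`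
  refine ⟨a - a * d * g * star (a * d) * a, by simp [hg], ?_⟩
  convert hnorm using 2
  noncomm_ring

variable [PartialOrder B] [StarOrderedRing B]

lemma exists_lift_nonneg_norm_le_one_star_mul_self_le (φ : A →⋆ₙₐ[ℂ] B) {s : A} {b : B}
    (hs : φ s = b) (hb0 : 0 ≤ b) (hb1 : ‖b‖ ≤ 1) :
    ∃ h : A, φ h = b ∧ 0 ≤ h ∧ ‖h‖ ≤ 1 ∧ star h * h ≤ star s * s := by
  refine ⟨cfcₙ (fun t : ℝ => √(min t 1)) (star s * s), ?_,
    cfcₙ_nonneg fun t _ => Real.sqrt_nonneg _, ?_, ?_⟩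
  · rw [φ.map_cfcₙ _ _ (hφa := by rw [map_mul, map_star]; exact .star_mul_self _), map_mul,
      map_star, hs, cfcₙ_sqrt_min_one_star_mul_self hb0 hb1]
  · refine norm_cfcₙ_le fun t _ => ?_
    rw [Real.norm_of_nonneg (Real.sqrt_nonneg _)]
    exact Real.sqrt_le_one.mpr (min_le_right _ _)
  · rw [(cfcₙ_predicate _ _ : IsSelfAdjoint _).star_eq, ← cfcₙ_mul _ _ _]
    conv_rhs => rw [← cfcₙ_id' ℝ (star s * s)]
    refine cfcₙ_mono fun t ht => ?_
    have ht0 : 0 ≤ t := quasispectrum_nonneg_of_nonneg _ (star_mul_self_nonneg s) t ht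
    rw [Real.mul_self_sqrt (le_min ht0 zero_le_one)]
    exact min_le_left _ _

end

/-- Positive contractions `b, c` with `‖b (c² - c)‖ ≤ C` lift to positive
contractions with the same bound. -/
theorem lift_pos_almost_idempotent
    {A B : Type} [NonUnitalCStarAlgebra A] [PartialOrder A] [StarOrderedRing A]
    [NonUnitalCStarAlgebra B] [PartialOrder B] [StarOrderedRing B]
    (φ : A →⋆ₙₐ[ℂ] B) (hφ : Function.Surjective φ)
    (C : ℝ) (hC : 0 < C)
    (b c : B)
    (hb1 : 0 ≤ b) (hb2 : (b : B⁺¹) ≤ 1)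
    (hc1 : 0 ≤ c) (hc2 : (c : B⁺¹) ≤ 1)
    (hbc : ‖b * (c * c - c)‖ ≤ C) :
    ∃ h p : A, φ h = b ∧ φ p = c ∧
      0 ≤ h ∧ (h : A⁺¹) ≤ 1 ∧ 0 ≤ p ∧ (p : A⁺¹) ≤ 1 ∧
      ‖h * (p * p - p)‖ ≤ C := by
  have hb := CStarAlgebra.inr_mem_Icc_iff_norm_le.mp ⟨Unitization.inr_nonneg_iff.mpr hb1, hb2⟩
  have hc := CStarAlgebra.inr_mem_Icc_iff_norm_le.mp ⟨Unitization.inr_nonneg_iff.mpr hc1, hc2⟩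
  obtain ⟨c', hc'⟩ := hφ c
  obtain ⟨p, hpc, hp0, hp1, -⟩ := exists_lift_nonneg_norm_le_one_star_mul_self_le φ hc' hc.1 hc.2
  obtain ⟨a, ha⟩ := hφ b
  obtain ⟨s, hsa, hsd⟩ := exists_lift_norm_mul_le φ hC a (p * p - p) (by simpa [ha, hpc] using hbc)
  obtain ⟨h, hhb, hh0, hh1, hhs⟩ :=
    exists_lift_nonneg_norm_le_one_star_mul_self_le φ (hsa.trans ha) hb.1 hb.2
  exact ⟨h, p, hhb, hpc, hh0, (CStarAlgebra.inr_mem_Icc_iff_norm_le.mpr ⟨hh0, hh1⟩).2,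
    hp0, (CStarAlgebra.inr_mem_Icc_iff_norm_le.mpr ⟨hp0, hp1⟩).2,
    (norm_mul_le_norm_mul_of_star_mul_self_le hhs _).trans hsd⟩
end

section
/- Let ≼ be a tree order on {1, …, s} and let ε > 0. Let φ : A → B be a surjective *-homomorphism of C*-algebras, and let h_1, …, h_s ∈ A satisfy 0 ≤ h_i ≤ 1 for all i, ‖φ((h_i − 1) h_j (h_i − 1))‖ ≤ ε whenever j is a child of i, and ‖φ(h_i)·φ(h_j)‖ ≤ ε whenever i and j are siblings. Then there exist k_1, …, k_s ∈ A with 0 ≤ k_i ≤ h_i and φ(k_i) = φ(h_i) for all i, such that ‖(k_i − 1) k_j (k_i − 1)‖ ≤ ε whenever j is a child of i, and ‖k_i k_j‖ ≤ ε whenever i and j are siblings. -/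
open scoped CStarAlgebra

/-- The strict order associated to a reflexive relation `le`. -/
def TreeOrder.lt {s : ℕ} (le : Fin s → Fin s → Prop) (i j : Fin s) : Prop :=
  le i j ∧ i ≠ j

/-- `le` is a tree order: a partial order in which the strict predecessors of any element
are linearly ordered. -/
structure IsTreeOrder {s : ℕ} (le : Fin s → Fin s → Prop) : Prop where
  refl : ∀ i, le i i
  antisymm : ∀ i j, le i j → le j i → i = j
  trans : ∀ i j k, le i j → le j k → le i k
  pred_linear : ∀ i i' j, TreeOrder.lt le i j → TreeOrder.lt le i' j → (le i i' ∨ le i' i)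

/-- `j` is a child of `i`: `i ≺ j` and there is no `k` with `i ≺ k ≺ j`. -/
def TreeOrder.IsChildOf {s : ℕ} (le : Fin s → Fin s → Prop) (j i : Fin s) : Prop :=
  TreeOrder.lt le i j ∧ ∀ k, TreeOrder.lt le i k → TreeOrder.lt le k j → False

/-- `i` and `j` are siblings: they are distinct and have the same strict predecessors. -/
def TreeOrder.AreSiblings {s : ℕ} (le : Fin s → Fin s → Prop) (i j : Fin s) : Prop :=
  i ≠ j ∧ ∀ k, TreeOrder.lt le k i ↔ TreeOrder.lt le k j

/-!
Work in the unitizations, where `ψ = Unitization.starMap φ` is a unital *-homomorphism, and treat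
the vertices in order of increasing depth, so that when `j` is treated its parents and the siblings
met so far are final. The element `x = k j` is then shrunk by a sequence of cuts, each keeping
`0 ≤ x' ≤ x` and `ψ x' = ψ x`. A cut is built from `g = f (b⋆ b)` with `f t = r / max t r`: then
`g ≤ 1`, `‖b g b⋆‖ ≤ r` because `t f t ≤ r`, and `ψ g = 1` as soon as `‖ψ (b⋆ b)‖ ≤ r`.

A parent relation `‖a x a‖ ≤ ε` (with `a = k i - 1`) is enforced by `x' = √x g √x`, `b = a √x`, and
survives any further shrinking. A sibling relation `‖t x‖ ≤ ε` is enforced by `x' = √(x g x)`,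
`b = t x`, `r = ε²`; operator monotonicity of `√` gives `x' ≤ x`, and `‖u x'‖ ≤ ‖u x‖` for every
`u`, so this cut preserves all relations enforced before it.
-/

namespace TreeOrder

variable {s : ℕ} {le : Fin s → Fin s → Prop}

lemma AreSiblings.symm {i j : Fin s} (h : AreSiblings le i j) : AreSiblings le j i :=
  ⟨h.1.symm, fun k => (h.2 k).symm⟩

noncomputable def depth (le : Fin s → Fin s → Prop) (j : Fin s) : ℕ :=
  {i | TreeOrder.lt le i j}.ncard

end TreeOrder

lemma IsTreeOrder.depth_lt_depth {s : ℕ} {le : Fin s → Fin s → Prop} (htree : IsTreeOrder le)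
    {i j : Fin s} (hij : TreeOrder.lt le i j) : TreeOrder.depth le i < TreeOrder.depth le j := by
  refine Set.ncard_lt_ncard ((Set.ssubset_iff_of_subset fun k hk => ?_).2
    ⟨i, hij, fun hii => hii.2 rfl⟩) (Set.toFinite _)
  exact ⟨htree.trans k i j hk.1 hij.1, by rintro rfl; exact hij.2 (htree.antisymm _ _ hij.1 hk.1)⟩

theorem Finset.exists_rel_forall_of_exists_rel {α ι : Type*} {R : α → α → Prop}
    {P : ι → α → Prop} (htrans : ∀ x y z, R x y → R y z → R x z)
    {x : α} (hx : R x x) (F : Finset ι) (hP : ∀ i ∈ F, ∀ x y, R y x → P i x → P i y)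
    (step : ∀ i ∈ F, ∀ y, R y x → ∃ z, R z y ∧ P i z) :
    ∃ y, R y x ∧ ∀ i ∈ F, P i y := by
  classical
  induction F using Finset.induction_on with
  | empty => exact ⟨x, hx, by simp⟩
  | insert i F hi ih =>
    obtain ⟨y, hyx, hy⟩ := ih (fun k hk => hP k (mem_insert_of_mem hk))
      fun k hk => step k (mem_insert_of_mem hk)
    obtain ⟨z, hzy, hz⟩ := step i (mem_insert_self i F) y hyx
    exact ⟨z, htrans _ _ _ hzy hyx,
      forall_mem_insert _ _ _ |>.2 ⟨hz, fun k hk => hP k (mem_insert_of_mem hk) y z hzy (hy k hk)⟩⟩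

noncomputable def softCut (r : ℝ) (t : ℝ) : ℝ := r / max t r

namespace softCut

variable {r : ℝ} (hr : 0 < r)
include hr

lemma max_pos (t : ℝ) : 0 < max t r := hr.trans_le (le_max_right t r)

lemma continuous : Continuous (softCut r) :=
  continuous_const.div (continuous_id.max continuous_const) fun t => (max_pos hr t).ne'

lemma nonneg (t : ℝ) : 0 ≤ softCut r t := div_nonneg hr.le (max_pos hr t).le

lemma le_one (t : ℝ) : softCut r t ≤ 1 := (div_le_one (max_pos hr t)).2 (le_max_right t r)

lemma eq_one {t : ℝ} (ht : t ≤ r) : softCut r t = 1 := by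
  rw [softCut, max_eq_right ht, div_self hr.ne']

lemma mul_le (t : ℝ) : t * softCut r t ≤ r := by
  rw [softCut, mul_div_assoc', div_le_iff₀ (max_pos hr t), mul_comm r]
  exact mul_le_mul_of_nonneg_right (le_max_left t r) hr.le

end softCut

section

variable {V : Type*} [NormedRing V] [StarRing V] [NormedStarGroup V]

def SoftTreeRelations {s : ℕ} (le : Fin s → Fin s → Prop) (ε : ℝ) (K : Fin s → V)
    (S : Finset (Fin s)) : Prop :=
  (∀ i ∈ S, ∀ j ∈ S, TreeOrder.IsChildOf le j i → ‖(K i - 1) * K j * (K i - 1)‖ ≤ ε) ∧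
    ∀ i ∈ S, ∀ j ∈ S, TreeOrder.AreSiblings le i j → ‖K i * K j‖ ≤ ε

lemma SoftTreeRelations.update_insert {s : ℕ} {le : Fin s → Fin s → Prop} {ε : ℝ}
    {K : Fin s → V} {S : Finset (Fin s)} {j : Fin s} {y : V} (hK : SoftTreeRelations le ε K S)
    (hjS : j ∉ S) (hjmax : ∀ i ∈ S, ¬ TreeOrder.lt le j i) (hKsa : ∀ i ∈ S, IsSelfAdjoint (K i))
    (hy : IsSelfAdjoint y)
    (hchild : ∀ i ∈ S, TreeOrder.IsChildOf le j i → ‖(K i - 1) * y * (K i - 1)‖ ≤ ε)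
    (hsib : ∀ i ∈ S, TreeOrder.AreSiblings le i j → ‖K i * y‖ ≤ ε) :
    SoftTreeRelations le ε (Function.update K j y) (insert j S) := by
  have hne {i : Fin s} (hi : i ∈ S) : i ≠ j := ne_of_mem_of_not_mem hi hjS
  constructor <;> intro i hi k hk hik <;>
    rcases Finset.mem_insert.1 hi with rfl | hiS <;> rcases Finset.mem_insert.1 hk with rfl | hkS
  · exact absurd rfl hik.1.2
  · exact absurd hik.1 (hjmax k hkS)
  · simpa [hne hiS] using hchild i hiS hik
  · simpa [hne hiS, hne hkS] using hK.1 i hiS k hkS hik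
  · exact absurd rfl hik.1
  · rw [Function.update_self, Function.update_of_ne (hne hkS), ← norm_star, star_mul, hy.star_eq,
      (hKsa k hkS).star_eq]
    exact hsib k hkS hik.symm
  · simpa [hne hiS] using hsib i hiS hik
  · simpa [hne hiS, hne hkS] using hK.2 i hiS k hkS hik

end

section

variable {V W : Type*} [CStarAlgebra V] [CStarAlgebra W] (ψ : V →⋆ₐ[ℂ] W)

lemma map_cfc_softCut_eq_one {r : ℝ} (hr : 0 < r) {y : V} (hy : IsSelfAdjoint y)
    (hψy : ‖ψ y‖ ≤ r) : ψ (cfc (softCut r) y) = 1 := by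
  nontriviality W
  have := softCut.continuous hr
  rw [StarAlgHomClass.map_cfc ψ _ y (hφa := hy.map ψ), ← cfc_const_one ℝ (ψ y) (hy.map ψ)]
  exact cfc_congr fun t ht => softCut.eq_one hr <|
    (Real.le_norm_self t).trans <| (spectrum.norm_le_norm_of_mem ht).trans hψy

variable [PartialOrder V]

def IsLiftBelow (y x : V) : Prop := 0 ≤ y ∧ y ≤ x ∧ ψ y = ψ x

namespace IsLiftBelow

variable {ψ} {x y z : V}

lemma refl (hx : 0 ≤ x) : IsLiftBelow ψ x x := ⟨hx, le_rfl, rfl⟩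

lemma trans (hzy : IsLiftBelow ψ z y) (hyx : IsLiftBelow ψ y x) : IsLiftBelow ψ z x :=
  ⟨hzy.1, hzy.2.1.trans hyx.2.1, hzy.2.2.trans hyx.2.2⟩

end IsLiftBelow

variable [StarOrderedRing V]

lemma norm_mul_cfc_mul_star_le {f : ℝ → ℝ} {r : ℝ} (hr : 0 ≤ r) (hf : Continuous f)
    (b : V) (hf0 : ∀ t, 0 ≤ f t) (hfr : ∀ t ∈ spectrum ℝ (star b * b), t * f t ≤ r) :
    ‖b * cfc f (star b * b) * star b‖ ≤ r := by
  set g := cfc (fun t => √(f t)) (star b * b)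
  have hg : star g = g := (cfc_nonneg fun t _ => Real.sqrt_nonneg (f t)).star_eq
  have hgg : g * g = cfc f (star b * b) := by
    rw [← cfc_mul ..]
    exact cfc_congr fun t _ => Real.mul_self_sqrt (hf0 t)
  have hgbg : g * (star b * b) * g = cfc (fun t => t * f t) (star b * b) := by
    rw [← cfc_id' ℝ (star b * b), ← cfc_mul .., ← cfc_mul .., cfc_id' ℝ (star b * b)]
    refine cfc_congr fun t _ => ?_
    rw [mul_right_comm, Real.mul_self_sqrt (hf0 t), mul_comm]
  calc ‖b * cfc f (star b * b) * star b‖ = ‖(b * g) * star (b * g)‖ := by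
        rw [star_mul, hg, ← hgg]; simp only [mul_assoc]
    _ = ‖star (b * g) * (b * g)‖ := by
        rw [CStarRing.norm_self_mul_star, CStarRing.norm_star_mul_self]
    _ = ‖cfc (fun t => t * f t) (star b * b)‖ := by
        rw [← hgbg, star_mul, hg]; simp only [mul_assoc]
    _ ≤ r := norm_cfc_le hr fun t ht => by
        have ht0 : 0 ≤ t := spectrum_nonneg_of_nonneg (star_mul_self_nonneg b) ht
        rw [Real.norm_of_nonneg (mul_nonneg ht0 (hf0 t))]
        exact hfr t ht

lemma norm_conj_le_norm_sq_of_le_one (c : V) {g : V} (hg0 : 0 ≤ g) (hg1 : g ≤ 1) :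
    ‖c * g * star c‖ ≤ ‖c‖ ^ 2 := by
  rw [sq, ← CStarRing.norm_self_mul_star, ← mul_one c, mul_one]
  refine CStarAlgebra.norm_le_norm_of_nonneg_of_le (star_right_conjugate_nonneg hg0 c) ?_
  simpa using star_right_conjugate_le_conjugate hg1 c

lemma norm_mul_sqrt_sq (u : V) {m : V} (hm : 0 ≤ m) :
    ‖u * CFC.sqrt m‖ ^ 2 = ‖u * m * star u‖ := by
  rw [sq, ← CStarRing.norm_self_mul_star, star_mul, (CFC.sqrt_nonneg m).star_eq, mul_assoc,
    ← mul_assoc (CFC.sqrt m), CFC.sqrt_mul_sqrt_self m hm, ← mul_assoc]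

variable {ψ} in
lemma IsLiftBelow.norm_conj_le {x y : V} (hyx : IsLiftBelow ψ y x) {a : V} (ha : IsSelfAdjoint a) :
    ‖a * y * a‖ ≤ ‖a * x * a‖ :=
  CStarAlgebra.norm_le_norm_of_nonneg_of_le (ha.conjugate_nonneg hyx.1)
    (ha.conjugate_le_conjugate hyx.2.1)

lemma exists_isLiftBelow_norm_conj_le {ε : ℝ} (hε : 0 < ε) {x a : V} (hx : 0 ≤ x)
    (ha : IsSelfAdjoint a) (hψ : ‖ψ (a * x * a)‖ ≤ ε) :
    ∃ y, IsLiftBelow ψ y x ∧ ‖a * y * a‖ ≤ ε := by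
  set b := a * CFC.sqrt x
  set g := cfc (softCut ε) (star b * b)
  have hb : star b = CFC.sqrt x * a := by rw [star_mul, (CFC.sqrt_nonneg x).star_eq, ha.star_eq]
  have hψb : ‖ψ (star b * b)‖ ≤ ε := by
    rwa [map_mul, map_star, CStarRing.norm_star_mul_self, ← CStarRing.norm_self_mul_star,
      ← map_star, ← map_mul, hb, mul_assoc, ← mul_assoc (CFC.sqrt x),
      CFC.sqrt_mul_sqrt_self x hx, ← mul_assoc]
  have hg0 : 0 ≤ g := cfc_nonneg fun t _ => softCut.nonneg hε t
  have hg1 : g ≤ 1 := cfc_le_one _ _ fun t _ => softCut.le_one hε t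
  refine ⟨CFC.sqrt x * g * CFC.sqrt x, ⟨?_, ?_, ?_⟩, ?_⟩
  · exact conjugate_nonneg_of_nonneg hg0 (CFC.sqrt_nonneg x)
  · simpa [CFC.sqrt_mul_sqrt_self x hx] using
      conjugate_le_conjugate_of_nonneg hg1 (CFC.sqrt_nonneg x)
  · rw [map_mul, map_mul, map_cfc_softCut_eq_one ψ hε (.star_mul_self b) hψb, mul_one,
      ← map_mul, CFC.sqrt_mul_sqrt_self x hx]
  · have : a * (CFC.sqrt x * g * CFC.sqrt x) * a = b * g * star b := by
      rw [hb]; simp only [b, mul_assoc]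
    rw [this]
    exact norm_mul_cfc_mul_star_le hε.le (softCut.continuous hε) b (softCut.nonneg hε)
      fun t _ => softCut.mul_le hε t

variable [PartialOrder W] [StarOrderedRing W]

lemma exists_isLiftBelow_norm_mul_le {ε : ℝ} (hε : 0 < ε) {x : V} (t : V) (hx : 0 ≤ x)
    (hψ : ‖ψ (t * x)‖ ≤ ε) :
    ∃ y, (IsLiftBelow ψ y x ∧ ∀ u, ‖u * y‖ ≤ ‖u * x‖) ∧ ‖t * y‖ ≤ ε := by
  have hε2 : 0 < ε ^ 2 := by positivity
  set g := cfc (softCut (ε ^ 2)) (star (t * x) * (t * x))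
  set m := x * g * x
  have hg0 : 0 ≤ g := cfc_nonneg fun t _ => softCut.nonneg hε2 t
  have hg1 : g ≤ 1 := cfc_le_one _ _ fun t _ => softCut.le_one hε2 t
  have hψg : ψ g = 1 := by
    refine map_cfc_softCut_eq_one ψ hε2 (.star_mul_self _) ?_
    rw [map_mul, map_star, CStarRing.norm_star_mul_self, ← sq]
    exact pow_le_pow_left₀ (norm_nonneg _) hψ 2
  have hm0 : 0 ≤ m := conjugate_nonneg_of_nonneg hg0 hx
  have hconj (u : V) : u * m * star u = (u * x) * g * star (u * x) := by
    rw [star_mul, hx.star_eq]; simp only [m, mul_assoc]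
  have hsq (u : V) : ‖u * CFC.sqrt m‖ ^ 2 = ‖(u * x) * g * star (u * x)‖ := by
    rw [norm_mul_sqrt_sq u hm0, hconj]
  refine ⟨CFC.sqrt m, ⟨⟨CFC.sqrt_nonneg m, ?_, ?_⟩, fun u => ?_⟩, ?_⟩
  · calc CFC.sqrt m ≤ CFC.sqrt (x * x) := CFC.sqrt_le_sqrt _ _ <| by
          simpa using conjugate_le_conjugate_of_nonneg hg1 hx
      _ = x := CFC.sqrt_mul_self x hx
  · have hψsq : ψ (CFC.sqrt m) * ψ (CFC.sqrt m) = ψ x * ψ x := by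
      rw [← map_mul, CFC.sqrt_mul_sqrt_self m hm0, map_mul, map_mul, hψg, mul_one]
    rw [← CFC.sqrt_unique hψsq (map_nonneg ψ (CFC.sqrt_nonneg m)),
      CFC.sqrt_mul_self _ (map_nonneg ψ hx)]
  · refine (pow_le_pow_iff_left₀ (norm_nonneg _) (norm_nonneg _) two_ne_zero).1 ?_
    rw [hsq]
    exact norm_conj_le_norm_sq_of_le_one _ hg0 hg1
  · refine (pow_le_pow_iff_left₀ (norm_nonneg _) hε.le two_ne_zero).1 ?_
    rw [hsq]
    exact norm_mul_cfc_mul_star_le hε2.le (softCut.continuous hε2) _ (softCut.nonneg hε2)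
      fun s _ => softCut.mul_le hε2 s

lemma exists_isLiftBelow_norm_conj_le_norm_mul_le {ε : ℝ} (hε : 0 < ε) {ι : Type*}
    (I : Finset ι) (a : ι → V) (J : Finset ι) (t : ι → V) {x : V} (hx : 0 ≤ x)
    (ha : ∀ i ∈ I, IsSelfAdjoint (a i))
    (hC : ∀ i ∈ I, ‖ψ (a i * x * a i)‖ ≤ ε) (hS : ∀ i ∈ J, ‖ψ (t i * x)‖ ≤ ε) :
    ∃ y, IsLiftBelow ψ y x ∧ (∀ i ∈ I, ‖a i * y * a i‖ ≤ ε) ∧ ∀ i ∈ J, ‖t i * y‖ ≤ ε := by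
  obtain ⟨x₁, hx₁, hC₁⟩ := Finset.exists_rel_forall_of_exists_rel (R := IsLiftBelow ψ)
    (P := fun i y => ‖a i * y * a i‖ ≤ ε) (fun _ _ _ => .trans) (.refl hx) I
    (fun i hi _ _ hyx hx => (hyx.norm_conj_le (ha i hi)).trans hx)
    fun i hi y hy => exists_isLiftBelow_norm_conj_le ψ hε hy.1 (ha i hi) <| by
      simpa only [map_mul, hy.2.2] using hC i hi
  obtain ⟨x₂, ⟨hx₂, -⟩, hS₂⟩ := Finset.exists_rel_forall_of_exists_rel
    (R := fun y x => IsLiftBelow ψ y x ∧ ∀ u, ‖u * y‖ ≤ ‖u * x‖) (P := fun i y => ‖t i * y‖ ≤ ε)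
    (fun _ _ _ hzy hyx => ⟨hzy.1.trans hyx.1, fun u => (hzy.2 u).trans (hyx.2 u)⟩)
    ⟨.refl hx₁.1, fun _ => le_rfl⟩ J (fun i _ _ _ hyx hx => (hyx.2 (t i)).trans hx)
    fun i hi y hy => exists_isLiftBelow_norm_mul_le ψ hε (t i) hy.1.1 <| by
      simpa only [map_mul, hy.1.2.2, hx₁.2.2] using hS i hi
  exact ⟨x₂, hx₂.trans hx₁, fun i hi => (hx₂.norm_conj_le (ha i hi)).trans (hC₁ i hi), hS₂⟩

theorem exists_isLiftBelow_softTreeRelations {s : ℕ} {le : Fin s → Fin s → Prop}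
    (htree : IsTreeOrder le) {ε : ℝ} (hε : 0 < ε) (h : Fin s → V) (hpos : ∀ i, 0 ≤ h i)
    (hchild : ∀ i j, TreeOrder.IsChildOf le j i → ‖ψ ((h i - 1) * h j * (h i - 1))‖ ≤ ε)
    (hsib : ∀ i j, TreeOrder.AreSiblings le i j → ‖ψ (h i * h j)‖ ≤ ε) (S : Finset (Fin s)) :
    ∃ K, (∀ i, IsLiftBelow ψ (K i) (h i)) ∧ SoftTreeRelations le ε K S := by
  classical
  induction S using Finset.induction_on_max_value (TreeOrder.depth le) with
  | empty => exact ⟨h, fun i => .refl (hpos i), by simp [SoftTreeRelations]⟩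
  | insert j S hjS hjmax ih =>
    obtain ⟨K, hKh, hK⟩ := ih
    have hψK (i : Fin s) : ψ (K i) = ψ (h i) := (hKh i).2.2
    obtain ⟨y, hyK, hyC, hyS⟩ := exists_isLiftBelow_norm_conj_le_norm_mul_le ψ hε
      (S.filter (TreeOrder.IsChildOf le j)) (fun i => K i - 1)
      (S.filter (TreeOrder.AreSiblings le · j)) K (hKh j).1
      (fun i _ => (IsSelfAdjoint.of_nonneg (hKh i).1).sub (.one _))
      (fun i hi => by
        simpa only [map_mul, map_sub, map_one, hψK] using hchild i j (Finset.mem_filter.1 hi).2)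
      (fun i hi => by
        simpa only [map_mul, hψK] using hsib i j (Finset.mem_filter.1 hi).2)
    refine ⟨Function.update K j y, fun i => ?_, hK.update_insert hjS
      (fun i hi hji => (hjmax i hi).not_gt (htree.depth_lt_depth hji))
      (fun i _ => .of_nonneg (hKh i).1) (.of_nonneg hyK.1)
      (fun i hi hij => hyC i (Finset.mem_filter.2 ⟨hi, hij⟩))
      (fun i hi hij => hyS i (Finset.mem_filter.2 ⟨hi, hij⟩))⟩
    rcases eq_or_ne i j with rfl | hij
    · simpa using hyK.trans (hKh i)
    · simpa [hij] using hKh i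

end

section Unitization

open scoped ComplexOrder

variable {A : Type*} [NonUnitalCStarAlgebra A]

lemma Unitization.fst_nonneg {x : A⁺¹} (hx : 0 ≤ x) : 0 ≤ x.fst :=
  spectrum_nonneg_of_nonneg hx (AlgHom.apply_mem_spectrum (Unitization.fstHom ℂ A) x)

lemma Unitization.inr_snd_eq_of_nonneg_of_le {x : A⁺¹} {a : A} (hx : 0 ≤ x) (hxa : x ≤ a) :
    ((x.snd : A) : A⁺¹) = x := by
  have hle := fst_nonneg (sub_nonneg.2 hxa)
  rw [sub_eq_add_neg, Unitization.fst_add, Unitization.fst_neg, Unitization.fst_inr, zero_add,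
    neg_nonneg] at hle
  have hfst : x.fst = 0 := le_antisymm hle (fst_nonneg hx)
  simpa [hfst] using x.inl_fst_add_inr_snd_eq

end Unitization

theorem lift_soft_tree_relations_general
    {s : ℕ} (le : Fin s → Fin s → Prop) (htree : IsTreeOrder le)
    (ε : ℝ) (hε : 0 < ε)
    {A B : Type} [NonUnitalCStarAlgebra A] [PartialOrder A] [StarOrderedRing A]
    [NonUnitalCStarAlgebra B] [PartialOrder B] [StarOrderedRing B]
    (φ : A →⋆ₙₐ[ℂ] B)
    (h : Fin s → A)
    (hpos : ∀ i, 0 ≤ h i)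
    (hchild : ∀ i j, TreeOrder.IsChildOf le j i →
      ‖Unitization.starMap φ (((h i : A⁺¹) - 1) * (h j : A⁺¹) * ((h i : A⁺¹) - 1))‖ ≤ ε)
    (hsib : ∀ i j, TreeOrder.AreSiblings le i j → ‖φ (h i) * φ (h j)‖ ≤ ε) :
    ∃ k : Fin s → A,
      (∀ i, 0 ≤ k i) ∧ (∀ i, k i ≤ h i) ∧ (∀ i, φ (k i) = φ (h i)) ∧
      (∀ i j, TreeOrder.IsChildOf le j i →
        ‖((k i : A⁺¹) - 1) * (k j : A⁺¹) * ((k i : A⁺¹) - 1)‖ ≤ ε) ∧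
      (∀ i j, TreeOrder.AreSiblings le i j → ‖k i * k j‖ ≤ ε) := by
  obtain ⟨K, hKh, hchildK, hsibK⟩ := exists_isLiftBelow_softTreeRelations (Unitization.starMap φ)
    htree hε (fun i => (h i : A⁺¹)) (fun i => Unitization.inr_nonneg_iff.2 (hpos i)) hchild
    (fun i j hij => by simpa [← Unitization.inr_mul, Unitization.norm_inr] using hsib i j hij)
    Finset.univ
  have hk (i : Fin s) : (((K i).snd : A) : A⁺¹) = K i :=
    Unitization.inr_snd_eq_of_nonneg_of_le (hKh i).1 (hKh i).2.1
  have hk0 (i : Fin s) : 0 ≤ (K i).snd := by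
    rw [← Unitization.inr_nonneg_iff, hk]
    exact (hKh i).1
  refine ⟨fun i => (K i).snd, hk0, fun i => ?_, fun i => ?_, fun i j hij => ?_, fun i j hij => ?_⟩
  · rw [← Unitization.inr_le_iff _ _ (.of_nonneg (hk0 i)) (.of_nonneg (hpos i)), hk]
    exact (hKh i).2.1
  · have hψ := (hKh i).2.2
    rw [← hk i, Unitization.starMap_inr, Unitization.starMap_inr] at hψ
    exact Unitization.inr_injective hψ
  · simpa only [hk] using hchildK i (Finset.mem_univ _) j (Finset.mem_univ _) hij
  · rw [← Unitization.norm_inr (𝕜 := ℂ), Unitization.inr_mul, hk, hk]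
    exact hsibK i (Finset.mem_univ _) j (Finset.mem_univ _) hij

/-- Soft tree relations lift: given positive contractions `h i` whose
images satisfy the softened tree relations, there are `k i` with `0 ≤ k i ≤ h i`,
`φ (k i) = φ (h i)`, satisfying the same softened tree relations. -/
theorem lift_soft_tree_relations
    {s : ℕ} (le : Fin s → Fin s → Prop) (htree : IsTreeOrder le)
    (ε : ℝ) (hε : 0 < ε)
    {A B : Type} [NonUnitalCStarAlgebra A] [PartialOrder A] [StarOrderedRing A]
    [NonUnitalCStarAlgebra B] [PartialOrder B] [StarOrderedRing B]
    (φ : A →⋆ₙₐ[ℂ] B) (hφ : Function.Surjective φ)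
    (h : Fin s → A)
    (hpos : ∀ i, 0 ≤ h i) (hle1 : ∀ i, (h i : A⁺¹) ≤ 1)
    (hchild : ∀ i j, TreeOrder.IsChildOf le j i →
      ‖Unitization.starMap φ (((h i : A⁺¹) - 1) * (h j : A⁺¹) * ((h i : A⁺¹) - 1))‖ ≤ ε)
    (hsib : ∀ i j, TreeOrder.AreSiblings le i j → ‖φ (h i) * φ (h j)‖ ≤ ε) :
    ∃ k : Fin s → A,
      (∀ i, 0 ≤ k i) ∧ (∀ i, k i ≤ h i) ∧ (∀ i, φ (k i) = φ (h i)) ∧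
      (∀ i j, TreeOrder.IsChildOf le j i →
        ‖((k i : A⁺¹) - 1) * (k j : A⁺¹) * ((k i : A⁺¹) - 1)‖ ≤ ε) ∧
      (∀ i j, TreeOrder.AreSiblings le i j → ‖k i * k j‖ ≤ ε) :=
  lift_soft_tree_relations_general le htree ε hε φ h hpos hchild hsib
end

section
/- For every real α > 0 and every ε > 0 there exists δ > 0 with the following property: for every C*-algebra A and all h, k ∈ A with 0 ≤ h ≤ 1 and 0 ≤ k ≤ 1, if ‖hk − kh‖ ≤ δ then ‖(h k h)^α − k^α h^{2α}‖ ≤ ε. -/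
open scoped CStarAlgebra NNReal
open Polynomial Set

/-!
Call `β` good (`ConjRpowApprox β`) if `‖(hkh)^β - k^β h^(2β)‖` is small, uniformly over all
C⋆-algebras, once `‖hk - kh‖` is small. Then `1` is good, sums of good exponents are good since
`(hkh)^(β+γ) = (hkh)^β (hkh)^γ` and `h^(2β)` almost commutes with `k^γ`, and `β` is good as soon
as `2β` is: for `q = k^(1/4)` one has `(qhq)^2 ≈ h q^4 h = hkh`, hence
`(hkh)^β ≈ (qhq)^(2β) ≈ h^(2β) q^(4β) = h^(2β) k^β ≈ k^β h^(2β)`, the second step being the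
estimate at `2β` with the roles of `h` and `k` exchanged. So every positive dyadic rational is
good, and as `t ↦ t^β` on `[0, 1]` depends uniformly continuously on `β`, every `β > 0` is good.

Uniformity over all C⋆-algebras comes from polynomial approximation of `t ↦ t^γ` on `[0, 1]`: for
a polynomial `p` and contractions `u, v`, `‖p(u) x - x p(v)‖ ≤ C_p ‖u x - x v‖` with `C_p`
depending only on the coefficients of `p`.
-/

universe u

section NonUnitalSeminormedRing

variable {R : Type*} [NonUnitalSeminormedRing R]

theorem norm_mul_le_of_norm_le_one_left {a : R} (ha : ‖a‖ ≤ 1) (b : R) : ‖a * b‖ ≤ ‖b‖ :=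
  (norm_mul_le a b).trans (mul_le_of_le_one_left (norm_nonneg b) ha)

theorem norm_mul_le_of_norm_le_one_right (a : R) {b : R} (hb : ‖b‖ ≤ 1) : ‖a * b‖ ≤ ‖a‖ :=
  (norm_mul_le a b).trans (mul_le_of_le_one_right (norm_nonneg a) hb)

theorem norm_mul_le_one {a b : R} (ha : ‖a‖ ≤ 1) (hb : ‖b‖ ≤ 1) : ‖a * b‖ ≤ 1 :=
  (norm_mul_le_of_norm_le_one_left ha b).trans hb

theorem norm_conj_mul_conj_sub_le {q h : R} (hq : ‖q‖ ≤ 1) (hh : ‖h‖ ≤ 1) :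
    ‖(q * h * q) * (q * h * q) - h * (q * q * q * q) * h‖ ≤ 2 * ‖q * h - h * q‖ :=
  calc _ = ‖(q * h - h * q) * (q * (q * (h * q))) + (h * (q * (q * q))) * (h * q - q * h)‖ := by
        congr 1; noncomm_ring
    _ ≤ ‖q * h - h * q‖ + ‖h * q - q * h‖ :=
        (norm_add_le _ _).trans (add_le_add
          (norm_mul_le_of_norm_le_one_right _
            (norm_mul_le_one hq (norm_mul_le_one hq (norm_mul_le_one hh hq))))
          (norm_mul_le_of_norm_le_one_left
            (norm_mul_le_one hh (norm_mul_le_one hq (norm_mul_le_one hq hq))) _))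
    _ = 2 * ‖q * h - h * q‖ := by rw [norm_sub_rev (h * q)]; ring

end NonUnitalSeminormedRing

section SeminormedRing

variable {R : Type*} [SeminormedRing R]

theorem norm_pow_mul_sub_mul_pow_le {u v : R} (hu : ‖u‖ ≤ 1) (hv : ‖v‖ ≤ 1) (x : R) (n : ℕ) :
    ‖u ^ n * x - x * v ^ n‖ ≤ n * ‖u * x - x * v‖ := by
  induction n with
  | zero => simp
  | succ n ih =>
    have hlast : ‖(u * x - x * v) * v ^ n‖ ≤ ‖u * x - x * v‖ := by
      rcases n with _ | n
      · simp
      · exact norm_mul_le_of_norm_le_one_right _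
          ((norm_pow_le' v n.succ_pos).trans (pow_le_one₀ (norm_nonneg v) hv))
    calc ‖u ^ (n + 1) * x - x * v ^ (n + 1)‖
        = ‖u * (u ^ n * x - x * v ^ n) + (u * x - x * v) * v ^ n‖ := by
          rw [pow_succ', pow_succ']; noncomm_ring
      _ ≤ n * ‖u * x - x * v‖ + ‖u * x - x * v‖ :=
          (norm_add_le _ _).trans
            (add_le_add ((norm_mul_le_of_norm_le_one_left hu _).trans ih) hlast)
      _ = (n + 1 : ℕ) * ‖u * x - x * v‖ := by push_cast; ring

theorem norm_aeval_mul_sub_mul_aeval_le [NormedAlgebra ℝ R] (p : ℝ[X]) {u v : R}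
    (hu : ‖u‖ ≤ 1) (hv : ‖v‖ ≤ 1) (x : R) :
    ‖aeval u p * x - x * aeval v p‖ ≤
      (∑ i ∈ Finset.range (p.natDegree + 1), |p.coeff i| * i) * ‖u * x - x * v‖ := by
  have hsum : aeval u p * x - x * aeval v p =
      ∑ i ∈ Finset.range (p.natDegree + 1), p.coeff i • (u ^ i * x - x * v ^ i) := by
    simp only [aeval_eq_sum_range, Finset.sum_mul, Finset.mul_sum, ← Finset.sum_sub_distrib,
      smul_sub, smul_mul_assoc, mul_smul_comm]
  rw [hsum, Finset.sum_mul]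
  refine (norm_sum_le _ _).trans (Finset.sum_le_sum fun i _ => ?_)
  rw [norm_smul, Real.norm_eq_abs, mul_assoc]
  exact mul_le_mul_of_nonneg_left (norm_pow_mul_sub_mul_pow_le hu hv x i) (abs_nonneg _)

end SeminormedRing

section Unital

variable {B : Type*} [CStarAlgebra B] [PartialOrder B] [StarOrderedRing B]

theorem spectrum_subset_Icc_of_nonneg_of_norm_le_one {u : B} (hu : 0 ≤ u) (hu1 : ‖u‖ ≤ 1) :
    spectrum ℝ u ⊆ Icc 0 1 := fun t ht =>
  ⟨spectrum_nonneg_of_nonneg hu ht,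
    (CFC.le_one_iff (R := ℝ) u).1 ((CStarAlgebra.norm_le_one_iff_of_nonneg u hu).1 hu1) t ht⟩

theorem norm_cfc_sub_cfc_le {f g : ℝ → ℝ} (hf : ContinuousOn f (Icc 0 1))
    (hg : ContinuousOn g (Icc 0 1)) {η : ℝ} (hfg : ∀ t ∈ Icc (0 : ℝ) 1, |f t - g t| ≤ η)
    {u : B} (hu : 0 ≤ u) (hu1 : ‖u‖ ≤ 1) : ‖cfc f u - cfc g u‖ ≤ η := by
  have hspec := spectrum_subset_Icc_of_nonneg_of_norm_le_one hu hu1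
  rw [← cfc_sub f g u (hf.mono hspec) (hg.mono hspec)]
  exact norm_cfc_le ((abs_nonneg _).trans (hfg 0 (left_mem_Icc.2 zero_le_one)))
    fun t ht => hfg t (hspec ht)

theorem norm_cfc_sub_aeval_le {f : ℝ → ℝ} (hf : ContinuousOn f (Icc 0 1)) {p : ℝ[X]} {η : ℝ}
    (hfp : ∀ t ∈ Icc (0 : ℝ) 1, |f t - p.eval t| ≤ η) {u : B} (hu : 0 ≤ u) (hu1 : ‖u‖ ≤ 1) :
    ‖cfc f u - aeval u p‖ ≤ η := by
  rw [← cfc_polynomial p u]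
  exact norm_cfc_sub_cfc_le hf p.continuous.continuousOn hfp hu hu1

theorem norm_cfc_mul_sub_mul_cfc_le {f : ℝ → ℝ} (hf : ContinuousOn f (Icc 0 1)) {p : ℝ[X]}
    {η : ℝ} (hfp : ∀ t ∈ Icc (0 : ℝ) 1, |f t - p.eval t| ≤ η) {u v : B} (hu : 0 ≤ u)
    (hu1 : ‖u‖ ≤ 1) (hv : 0 ≤ v) (hv1 : ‖v‖ ≤ 1) {x : B} (hx : ‖x‖ ≤ 1) :
    ‖cfc f u * x - x * cfc f v‖ ≤
      2 * η + (∑ i ∈ Finset.range (p.natDegree + 1), |p.coeff i| * i) * ‖u * x - x * v‖ := by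
  have hvp : ‖aeval v p - cfc f v‖ ≤ η := by
    rw [norm_sub_rev]; exact norm_cfc_sub_aeval_le hf hfp hv hv1
  calc ‖cfc f u * x - x * cfc f v‖
      = ‖(cfc f u - aeval u p) * x + (aeval u p * x - x * aeval v p)
          + x * (aeval v p - cfc f v)‖ := by congr 1; noncomm_ring
    _ ≤ η + (∑ i ∈ Finset.range (p.natDegree + 1), |p.coeff i| * i) * ‖u * x - x * v‖ + η :=
        norm_add₃_le.trans (add_le_add_three
          ((norm_mul_le_of_norm_le_one_right _ hx).trans (norm_cfc_sub_aeval_le hf hfp hu hu1))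
          (norm_aeval_mul_sub_mul_aeval_le p hu1 hv1 x)
          ((norm_mul_le_of_norm_le_one_left hx _).trans hvp))
    _ = _ := by ring

end Unital

section NonUnital

variable {A : Type*} [NonUnitalCStarAlgebra A] [PartialOrder A] [StarOrderedRing A]

theorem Unitization.inr_nnrpow_eq_cfc {a : A} (ha : 0 ≤ a) {γ : ℝ≥0} (hγ : 0 < γ) :
    ((a ^ γ : A) : A⁺¹) = cfc (fun t : ℝ => t ^ (γ : ℝ)) (a : A⁺¹) := by
  rw [CFC.nnrpow_eq_cfcₙ_real a γ, Unitization.real_cfcₙ_eq_cfc_inr a (fun t : ℝ => t ^ (γ : ℝ))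
    (Real.zero_rpow (NNReal.coe_ne_zero.2 hγ.ne'))]

theorem norm_nnrpow_le_one {a : A} (ha : 0 ≤ a) (ha1 : ‖a‖ ≤ 1) {γ : ℝ≥0} (hγ : 0 < γ) :
    ‖a ^ γ‖ ≤ 1 := by
  rw [CFC.norm_nnrpow a hγ]
  exact Real.rpow_le_one (norm_nonneg a) ha1 γ.2

end NonUnital

theorem exists_abs_rpow_sub_rpow_le {α : ℝ} (hα : 0 < α) {η : ℝ} (hη : 0 < η) :
    ∃ ρ > 0, ∀ d : ℝ, |d - α| < ρ → ∀ t ∈ Icc (0 : ℝ) 1, |t ^ d - t ^ α| ≤ η := by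
  have hK : IsCompact (Icc (0 : ℝ) 1 ×ˢ Icc (α / 2) (2 * α)) := isCompact_Icc.prod isCompact_Icc
  have hcont : ContinuousOn (fun p : ℝ × ℝ => p.1 ^ p.2) (Icc (0 : ℝ) 1 ×ˢ Icc (α / 2) (2 * α)) :=
    fun p hp => (Real.continuousAt_rpow p (Or.inr (by linarith [hp.2.1]))).continuousWithinAt
  obtain ⟨ρ, hρ, H⟩ :=
    Metric.uniformContinuousOn_iff_le.1 (hK.uniformContinuousOn_of_continuous hcont) η hη
  refine ⟨min ρ (α / 2), by positivity, fun d hd t ht => ?_⟩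
  have hdρ := hd.trans_le (min_le_left _ _)
  have hdα := abs_lt.1 (hd.trans_le (min_le_right _ _))
  simpa [Real.dist_eq] using H (t, d) ⟨ht, by constructor <;> linarith⟩ (t, α)
    ⟨ht, by constructor <;> linarith⟩ (by simpa [Prod.dist_eq, Real.dist_eq] using hdρ.le)

theorem exists_dist_natCast_mul_inv_two_pow_lt {α : ℝ≥0} (hα : 0 < α) {ρ : ℝ}
    (hρ : 0 < ρ) : ∃ j m : ℕ, 0 < m ∧ dist α (m * (2 ^ j)⁻¹) < ρ := by
  obtain ⟨j, hj⟩ := exists_pow_lt_of_lt_one hρ (show (2⁻¹ : ℝ) < 1 by norm_num)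
  refine ⟨j, ⌈α * 2 ^ j⌉₊, Nat.ceil_pos.2 (by positivity), ?_⟩
  have h2j : (0 : ℝ) < 2 ^ j := by positivity
  have hle : (α : ℝ) ≤ ⌈α * 2 ^ j⌉₊ * (2 ^ j)⁻¹ := by
    rw [← div_eq_mul_inv, le_div_iff₀ h2j]
    exact_mod_cast Nat.le_ceil (α * 2 ^ j)
  have hlt : (⌈α * 2 ^ j⌉₊ : ℝ) * (2 ^ j)⁻¹ < α + (2 ^ j)⁻¹ := by
    rw [← div_eq_mul_inv, div_lt_iff₀ h2j, add_mul, inv_mul_cancel₀ h2j.ne']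
    exact_mod_cast Nat.ceil_lt_add_one (α * 2 ^ j).2
  rw [inv_pow] at hj
  rw [NNReal.dist_eq, abs_sub_lt_iff]
  push_cast
  constructor <;> linarith

-- `x` lives in `A⁺¹` so that both `x = 1` and `x ∈ A` are covered.
theorem exists_norm_inr_nnrpow_mul_sub_mul_inr_nnrpow_le {γ : ℝ≥0} (hγ : 0 < γ) {ε : ℝ}
    (hε : 0 < ε) :
    ∃ δ > 0, ∀ (A : Type u) [NonUnitalCStarAlgebra A] [PartialOrder A] [StarOrderedRing A]
      (a b : A) (x : A⁺¹), 0 ≤ a → ‖a‖ ≤ 1 → 0 ≤ b → ‖b‖ ≤ 1 → ‖x‖ ≤ 1 →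
        ‖a * x - x * b‖ ≤ δ → ‖(a ^ γ : A) * x - x * (b ^ γ : A)‖ ≤ ε := by
  have hf : ContinuousOn (fun t : ℝ => t ^ (γ : ℝ)) (Icc 0 1) :=
    (Real.continuous_rpow_const γ.2).continuousOn
  obtain ⟨p, hp⟩ := exists_polynomial_near_of_continuousOn 0 1 _ hf (ε / 4) (by positivity)
  set C := ∑ i ∈ Finset.range (p.natDegree + 1), |p.coeff i| * i
  obtain ⟨δ, hδ, hCδ⟩ := exists_pos_mul_lt (half_pos hε) C
  refine ⟨δ, hδ, fun A _ _ _ a b x ha ha1 hb hb1 hx hδx => ?_⟩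
  rw [Unitization.inr_nnrpow_eq_cfc ha hγ, Unitization.inr_nnrpow_eq_cfc hb hγ]
  calc _ ≤ 2 * (ε / 4) + C * ‖(a : A⁺¹) * x - x * b‖ :=
        norm_cfc_mul_sub_mul_cfc_le hf (fun t ht => by rw [abs_sub_comm]; exact (hp t ht).le)
          (Unitization.inr_nonneg_iff.2 ha) (by rwa [Unitization.norm_inr])
          (Unitization.inr_nonneg_iff.2 hb) (by rwa [Unitization.norm_inr]) hx
    _ ≤ 2 * (ε / 4) + C * δ := by gcongr
    _ ≤ ε := by linarith

theorem exists_norm_nnrpow_sub_nnrpow_le {γ : ℝ≥0} (hγ : 0 < γ) {ε : ℝ} (hε : 0 < ε) :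
    ∃ δ > 0, ∀ (A : Type u) [NonUnitalCStarAlgebra A] [PartialOrder A] [StarOrderedRing A]
      (a b : A), 0 ≤ a → ‖a‖ ≤ 1 → 0 ≤ b → ‖b‖ ≤ 1 → ‖a - b‖ ≤ δ → ‖a ^ γ - b ^ γ‖ ≤ ε := by
  obtain ⟨δ, hδ, H⟩ := exists_norm_inr_nnrpow_mul_sub_mul_inr_nnrpow_le hγ hε
  refine ⟨δ, hδ, fun A _ _ _ a b ha ha1 hb hb1 hab => ?_⟩
  simpa [← Unitization.inr_sub, Unitization.norm_inr] using
    H A a b 1 ha ha1 hb hb1 norm_one.le (by simpa [← Unitization.inr_sub, Unitization.norm_inr])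

theorem exists_norm_nnrpow_mul_sub_mul_nnrpow_le {γ : ℝ≥0} (hγ : 0 < γ) {ε : ℝ} (hε : 0 < ε) :
    ∃ δ > 0, ∀ (A : Type u) [NonUnitalCStarAlgebra A] [PartialOrder A] [StarOrderedRing A]
      (a b : A), 0 ≤ a → ‖a‖ ≤ 1 → ‖b‖ ≤ 1 → ‖a * b - b * a‖ ≤ δ →
        ‖a ^ γ * b - b * a ^ γ‖ ≤ ε := by
  obtain ⟨δ, hδ, H⟩ := exists_norm_inr_nnrpow_mul_sub_mul_inr_nnrpow_le hγ hε
  refine ⟨δ, hδ, fun A _ _ _ a b ha ha1 hb1 hab => ?_⟩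
  simpa [← Unitization.inr_mul, ← Unitization.inr_sub, Unitization.norm_inr] using
    H A a a b ha ha1 ha ha1 (by rwa [Unitization.norm_inr])
      (by simpa [← Unitization.inr_mul, ← Unitization.inr_sub, Unitization.norm_inr])

theorem exists_norm_nnrpow_mul_nnrpow_sub_le {x y : ℝ≥0} (hx : 0 < x) (hy : 0 < y) {ε : ℝ}
    (hε : 0 < ε) :
    ∃ δ > 0, ∀ (A : Type u) [NonUnitalCStarAlgebra A] [PartialOrder A] [StarOrderedRing A]
      (h k : A), 0 ≤ h → ‖h‖ ≤ 1 → 0 ≤ k → ‖k‖ ≤ 1 → ‖h * k - k * h‖ ≤ δ →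
        ‖h ^ x * k ^ y - k ^ y * h ^ x‖ ≤ ε := by
  obtain ⟨δ₁, hδ₁, H₁⟩ := exists_norm_nnrpow_mul_sub_mul_nnrpow_le hy hε
  obtain ⟨δ₂, hδ₂, H₂⟩ := exists_norm_nnrpow_mul_sub_mul_nnrpow_le hx hδ₁
  refine ⟨δ₂, hδ₂, fun A _ _ _ h k hh hh1 hk hk1 hhk => ?_⟩
  rw [norm_sub_rev]
  exact H₁ A k (h ^ x) hk hk1 (norm_nnrpow_le_one hh hh1 hx)
    (by rw [norm_sub_rev]; exact H₂ A h k hh hh1 hk1 hhk)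

theorem exists_norm_nnrpow_sub_nnrpow_le_of_dist_lt {α : ℝ≥0} (hα : 0 < α) {ε : ℝ} (hε : 0 < ε) :
    ∃ ρ > 0, ∀ d : ℝ≥0, dist d α < ρ →
      ∀ (A : Type u) [NonUnitalCStarAlgebra A] [PartialOrder A] [StarOrderedRing A]
        (a : A), 0 ≤ a → ‖a‖ ≤ 1 → ‖a ^ d - a ^ α‖ ≤ ε := by
  obtain ⟨ρ, hρ, H⟩ := exists_abs_rpow_sub_rpow_le hα hε
  refine ⟨min ρ α, by positivity, fun d hd A _ _ _ a ha ha1 => ?_⟩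
  rw [NNReal.dist_eq] at hd
  have hd0 : 0 < d := by
    have := (abs_lt.1 (hd.trans_le (min_le_right _ _))).1
    exact_mod_cast (show (0 : ℝ) < d by linarith)
  rw [← Unitization.norm_inr (𝕜 := ℂ), Unitization.inr_sub, Unitization.inr_nnrpow_eq_cfc ha hd0,
    Unitization.inr_nnrpow_eq_cfc ha hα]
  exact norm_cfc_sub_cfc_le (Real.continuous_rpow_const d.2).continuousOn
    (Real.continuous_rpow_const α.2).continuousOn (H d (hd.trans_le (min_le_left _ _)))
    (Unitization.inr_nonneg_iff.2 ha) (by rwa [Unitization.norm_inr])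

def ConjRpowApprox (β : ℝ≥0) : Prop :=
  ∀ ε > (0 : ℝ), ∃ δ > (0 : ℝ), ∀ (A : Type u) [NonUnitalCStarAlgebra A] [PartialOrder A]
    [StarOrderedRing A] (h k : A), 0 ≤ h → ‖h‖ ≤ 1 → 0 ≤ k → ‖k‖ ≤ 1 →
      ‖h * k - k * h‖ ≤ δ → ‖(h * k * h) ^ β - k ^ β * h ^ (2 * β)‖ ≤ ε

theorem conjRpowApprox_one : ConjRpowApprox.{u} 1 := by
  intro ε hε
  refine ⟨ε, hε, fun A _ _ _ h k hh hh1 hk hk1 hhk => ?_⟩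
  rw [CFC.nnrpow_one _ (conjugate_nonneg_of_nonneg hk hh), CFC.nnrpow_one k hk, mul_one,
    CFC.nnrpow_two h hh]
  calc ‖h * k * h - k * (h * h)‖ = ‖(h * k - k * h) * h‖ := by congr 1; noncomm_ring
    _ ≤ ε := (norm_mul_le_of_norm_le_one_right _ hh1).trans hhk

theorem ConjRpowApprox.add {β γ : ℝ≥0} (hβ : 0 < β) (hγ : 0 < γ) (Hβ : ConjRpowApprox.{u} β)
    (Hγ : ConjRpowApprox.{u} γ) : ConjRpowApprox.{u} (β + γ) := by
  intro ε hε
  obtain ⟨δ₁, hδ₁, H₁⟩ := Hβ (ε / 3) (by positivity)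
  obtain ⟨δ₂, hδ₂, H₂⟩ := Hγ (ε / 3) (by positivity)
  obtain ⟨δ₃, hδ₃, H₃⟩ :=
    exists_norm_nnrpow_mul_nnrpow_sub_le.{u} (mul_pos two_pos hβ) hγ (by positivity : 0 < ε / 3)
  refine ⟨min δ₁ (min δ₂ δ₃), by positivity, fun A _ _ _ h k hh hh1 hk hk1 hhk => ?_⟩
  simp only [le_min_iff] at hhk
  have hx : 0 ≤ h * k * h := conjugate_nonneg_of_nonneg hk hh
  have hx1 : ‖h * k * h‖ ≤ 1 := norm_mul_le_one (norm_mul_le_one hh1 hk1) hh1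
  rw [CFC.nnrpow_add hβ hγ, CFC.nnrpow_add hβ hγ, mul_add,
    CFC.nnrpow_add (mul_pos two_pos hβ) (mul_pos two_pos hγ)]
  calc _ = ‖((h * k * h) ^ β - k ^ β * h ^ (2 * β)) * (h * k * h) ^ γ
          + (k ^ β * h ^ (2 * β)) * ((h * k * h) ^ γ - k ^ γ * h ^ (2 * γ))
          + k ^ β * (h ^ (2 * β) * k ^ γ - k ^ γ * h ^ (2 * β)) * h ^ (2 * γ)‖ := by
        congr 1; noncomm_ring
    _ ≤ ε / 3 + ε / 3 + ε / 3 := norm_add₃_le.trans (add_le_add_three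
        ((norm_mul_le_of_norm_le_one_right _ (norm_nnrpow_le_one hx hx1 hγ)).trans
          (H₁ A h k hh hh1 hk hk1 hhk.1))
        ((norm_mul_le_of_norm_le_one_left (norm_mul_le_one (norm_nnrpow_le_one hk hk1 hβ)
          (norm_nnrpow_le_one hh hh1 (mul_pos two_pos hβ))) _).trans
          (H₂ A h k hh hh1 hk hk1 hhk.2.1))
        ((norm_mul_le_of_norm_le_one_right _
          (norm_nnrpow_le_one hh hh1 (mul_pos two_pos hγ))).trans
          ((norm_mul_le_of_norm_le_one_left (norm_nnrpow_le_one hk hk1 hβ) _).trans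
            (H₃ A h k hh hh1 hk hk1 hhk.2.2))))
    _ = ε := by ring

theorem ConjRpowApprox.of_two_mul {β : ℝ≥0} (hβ : 0 < β) (H : ConjRpowApprox.{u} (2 * β)) :
    ConjRpowApprox.{u} β := by
  intro ε hε
  obtain ⟨δ₁, hδ₁, H₁⟩ := exists_norm_nnrpow_sub_nnrpow_le.{u} hβ (by positivity : 0 < ε / 3)
  obtain ⟨δ₂, hδ₂, H₂⟩ := H (ε / 3) (by positivity)
  obtain ⟨δ₃, hδ₃, H₃⟩ := exists_norm_nnrpow_mul_sub_mul_nnrpow_le.{u} (γ := 4⁻¹) (by norm_num)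
    (lt_min (half_pos hδ₁) hδ₂)
  obtain ⟨δ₄, hδ₄, H₄⟩ :=
    exists_norm_nnrpow_mul_nnrpow_sub_le.{u} (mul_pos two_pos hβ) hβ (by positivity : 0 < ε / 3)
  refine ⟨min δ₃ δ₄, by positivity, fun A _ _ _ h k hh hh1 hk hk1 hhk => ?_⟩
  simp only [le_min_iff] at hhk
  have h4 : (0 : ℝ≥0) < 4⁻¹ := by norm_num
  have hqk : k ^ (4⁻¹ : ℝ≥0) * k ^ (4⁻¹ : ℝ≥0) * k ^ (4⁻¹ : ℝ≥0) * k ^ (4⁻¹ : ℝ≥0) = k := by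
    rw [← CFC.nnrpow_add h4 h4, ← CFC.nnrpow_add (add_pos h4 h4) h4,
      ← CFC.nnrpow_add (add_pos (add_pos h4 h4) h4) h4,
      show (4⁻¹ + 4⁻¹ + 4⁻¹ + 4⁻¹ : ℝ≥0) = 1 by norm_num, CFC.nnrpow_one k hk]
  set q := k ^ (4⁻¹ : ℝ≥0)
  have hq : 0 ≤ q := CFC.nnrpow_nonneg
  have hq1 : ‖q‖ ≤ 1 := norm_nnrpow_le_one hk hk1 h4
  have hqh : ‖q * h - h * q‖ ≤ min (δ₁ / 2) δ₂ :=
    H₃ A k h hk hk1 hh1 (by rw [norm_sub_rev]; exact hhk.1)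
  simp only [le_min_iff] at hqh
  set p := q * h * q
  have hp : 0 ≤ p := conjugate_nonneg_of_nonneg hh hq
  have hp1 : ‖p‖ ≤ 1 := norm_mul_le_one (norm_mul_le_one hq1 hh1) hq1
  have hkh_sq : ‖(h * k * h) ^ β - p ^ (2 * β)‖ ≤ ε / 3 := by
    rw [← CFC.nnrpow_nnrpow]
    refine H₁ A _ _ (conjugate_nonneg_of_nonneg hk hh)
      (norm_mul_le_one (norm_mul_le_one hh1 hk1) hh1) CFC.nnrpow_nonneg
      (norm_nnrpow_le_one hp hp1 two_pos) ?_
    rw [CFC.nnrpow_two p hp, norm_sub_rev, ← hqk]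
    linarith [norm_conj_mul_conj_sub_le hq1 hh1]
  have hsq : ‖p ^ (2 * β) - h ^ (2 * β) * k ^ β‖ ≤ ε / 3 := by
    have := H₂ A q h hq hq1 hh hh1 hqh.2
    rwa [CFC.nnrpow_nnrpow, show (4⁻¹ : ℝ≥0) * (2 * (2 * β)) = β by ring] at this
  calc _ = ‖((h * k * h) ^ β - p ^ (2 * β)) + (p ^ (2 * β) - h ^ (2 * β) * k ^ β)
          + (h ^ (2 * β) * k ^ β - k ^ β * h ^ (2 * β))‖ := by congr 1; abel
    _ ≤ ε / 3 + ε / 3 + ε / 3 :=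
        norm_add₃_le.trans (add_le_add_three hkh_sq hsq (H₄ A h k hh hh1 hk hk1 hhk.2))
    _ = ε := by ring

theorem conjRpowApprox_inv_two_pow (j : ℕ) : ConjRpowApprox.{u} (2 ^ j)⁻¹ := by
  induction j with
  | zero => simpa using conjRpowApprox_one
  | succ j ih =>
    refine ConjRpowApprox.of_two_mul (by positivity) ?_
    rwa [pow_succ, mul_inv, mul_left_comm, mul_inv_cancel₀ two_ne_zero, mul_one]

theorem ConjRpowApprox.natCast_mul {β : ℝ≥0} (hβ : 0 < β) (H : ConjRpowApprox.{u} β) {m : ℕ}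
    (hm : 0 < m) : ConjRpowApprox.{u} (m * β) := by
  induction m, hm using Nat.le_induction with
  | base => simpa using H
  | succ m hm ih =>
    rw [Nat.cast_succ, add_one_mul]
    exact ih.add (mul_pos (by exact_mod_cast hm) hβ) hβ H

theorem ConjRpowApprox.of_mem_closure {α : ℝ≥0} (hα : 0 < α)
    (H : α ∈ closure {β | ConjRpowApprox.{u} β}) : ConjRpowApprox.{u} α := by
  intro ε hε
  obtain ⟨ρ₁, hρ₁, E₁⟩ := exists_norm_nnrpow_sub_nnrpow_le_of_dist_lt.{u} hα
    (by positivity : 0 < ε / 4)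
  obtain ⟨ρ₂, hρ₂, E₂⟩ := exists_norm_nnrpow_sub_nnrpow_le_of_dist_lt.{u} (mul_pos two_pos hα)
    (by positivity : 0 < ε / 4)
  obtain ⟨d, hd, hdα⟩ := Metric.mem_closure_iff.1 H (min (min ρ₁ (ρ₂ / 2)) α) (by positivity)
  rw [dist_comm, lt_min_iff, lt_min_iff, NNReal.dist_eq] at hdα
  obtain ⟨⟨hdρ₁, hdρ₂⟩, hdα⟩ := hdα
  have hd0 : 0 < d := by
    have := (abs_sub_lt_iff.1 hdα).2
    exact_mod_cast (show (0 : ℝ) < d by linarith)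
  have h2d : dist (2 * d) (2 * α) < ρ₂ := by
    rw [NNReal.dist_eq]
    push_cast
    rw [← mul_sub, abs_mul, abs_two]
    linarith
  replace hdρ₁ : dist d α < ρ₁ := by rwa [NNReal.dist_eq]
  obtain ⟨δ, hδ, Hd⟩ := hd (ε / 4) (by positivity)
  refine ⟨δ, hδ, fun A _ _ _ h k hh hh1 hk hk1 hhk => ?_⟩
  have hx : 0 ≤ h * k * h := conjugate_nonneg_of_nonneg hk hh
  have hx1 : ‖h * k * h‖ ≤ 1 := norm_mul_le_one (norm_mul_le_one hh1 hk1) hh1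
  calc _ = ‖((h * k * h) ^ α - (h * k * h) ^ d) + ((h * k * h) ^ d - k ^ d * h ^ (2 * d))
          + (k ^ d - k ^ α) * h ^ (2 * d) + k ^ α * (h ^ (2 * d) - h ^ (2 * α))‖ := by
        congr 1; noncomm_ring
    _ ≤ ε / 4 + ε / 4 + ε / 4 + ε / 4 := by
        refine (norm_add_le _ _).trans (add_le_add (norm_add₃_le.trans (add_le_add_three ?_
          (Hd A h k hh hh1 hk hk1 hhk) ?_)) ?_)
        · rw [norm_sub_rev]; exact E₁ d hdρ₁ A _ hx hx1
        · exact (norm_mul_le_of_norm_le_one_right _ (norm_nnrpow_le_one hh hh1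
            (mul_pos two_pos hd0))).trans (E₁ d hdρ₁ A k hk hk1)
        · exact (norm_mul_le_of_norm_le_one_left (norm_nnrpow_le_one hk hk1 hα) _).trans
            (E₂ _ h2d A h hh hh1)
    _ = ε := by ring

theorem conjRpowApprox {α : ℝ≥0} (hα : 0 < α) : ConjRpowApprox.{u} α :=
  ConjRpowApprox.of_mem_closure hα <| Metric.mem_closure_iff.2 fun ρ hρ => by
    obtain ⟨j, m, hm, hjm⟩ := exists_dist_natCast_mul_inv_two_pow_lt hα hρ
    exact ⟨_, (conjRpowApprox_inv_two_pow j).natCast_mul (by positivity) hm, hjm⟩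

/-- For every `α > 0` and `ε > 0` there is `δ > 0` such that in every
C*-algebra, positive contractions `h, k` with `‖hk - kh‖ ≤ δ` satisfy
`‖(h k h)^α - k^α h^{2α}‖ ≤ ε`. -/
theorem approx_commuting_rpow
    (α : ℝ) (hα : 0 < α) (ε : ℝ) (hε : 0 < ε) :
    ∃ δ : ℝ, 0 < δ ∧
      ∀ (A : Type) [NonUnitalCStarAlgebra A] [PartialOrder A] [StarOrderedRing A],
        ∀ h k : A, 0 ≤ h → (h : A⁺¹) ≤ 1 → 0 ≤ k → (k : A⁺¹) ≤ 1 →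
          ‖h * k - k * h‖ ≤ δ →
          ‖CFC.nnrpow (h * k * h) α.toNNReal -
              CFC.nnrpow k α.toNNReal * CFC.nnrpow h (2 * α).toNNReal‖ ≤ ε := by
  obtain ⟨δ, hδ, H⟩ := conjRpowApprox.{0} (Real.toNNReal_pos.2 hα) ε hε
  refine ⟨δ, hδ, fun A _ _ _ h k hh hh1 hk hk1 hhk => ?_⟩
  have hnorm {a : A} (ha : 0 ≤ a) (ha1 : (a : A⁺¹) ≤ 1) : ‖a‖ ≤ 1 :=
    (CStarAlgebra.inr_mem_Icc_iff_norm_le.1 ⟨Unitization.inr_nonneg_iff.2 ha, ha1⟩).2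
  rw [Real.toNNReal_mul zero_le_two, Real.toNNReal_ofNat]
  exact H A h k hh (hnorm hh hh1) hk (hnorm hk hk1) hhk
end
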